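/- arXiv:1005.2692 — 11 statements merged into one kernel-verified Lean document; each statement's English description precedes it below -/
import Mathlib

section
/- Let k ≥ 1, let a_1, …, a_k be pairwise relatively prime positive integers, and let t ≥ 1 be an integer. Then the number of representations of (k+t-1)·Π − Σ in terms of (A_1, …, A_k) is exactly the binomial coefficient C(k+t-2, k-1). -/
lemma sum_count_card {k : ℕ} (s : Multiset (Fin k)) : ∑ i, s.count i = Multiset.card s := by
  rw [← Multiset.toFinset_sum_count_eq]
  exact (Finset.sum_subset (Finset.subset_univ _) (fun x _ hx => Multiset.count_eq_zero.2 (by simpa using hx))).symm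

lemma ncard_sum_eq (k N : ℕ) :
    {m : Fin k → ℕ | ∑ i, m i = N}.ncard = Nat.multichoose k N := by
  rw [← Nat.card_coe_set_eq]
  have e : {m : Fin k → ℕ | ∑ i, m i = N} ≃ Sym (Fin k) N := by
    refine Equiv.trans (Equiv.subtypeEquiv (Finsupp.equivFunOnFinite.symm.trans Multiset.toFinsupp.symm.toEquiv) ?_) (Equiv.refl _)
    intro m
    simp only [Set.mem_setOf_eq, Equiv.trans_apply, Sym]
    constructor
    · intro h
      show Multiset.card _ = N
      rw [← sum_count_card]
      convert h using 1
      apply Finset.sum_congr rfl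
      intro i _
      rw [← Multiset.toFinsupp_apply]
      simp
    · intro h
      have h' : Multiset.card ((Multiset.toFinsupp.symm.toEquiv) (Finsupp.equivFunOnFinite.symm m)) = N := h
      rw [← sum_count_card] at h'
      rw [← h']
      apply Finset.sum_congr rfl
      intro i _
      rw [← Multiset.toFinsupp_apply]
      simp
  rw [Nat.card_congr e, Nat.card_eq_fintype_card, Sym.card_sym_eq_multichoose]
  simp



/-- The number of representations of an integer `x` as a nonnegative integral
linear combination `∑ i, m i * A i` of `A 0, …, A (k-1)`.
(Negative integers have zero representations.) -/
noncomputable def numRep {k : ℕ} (A : Fin k → ℕ) (x : ℤ) : ℕ :=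
  {m : Fin k → ℕ | (∑ i, (m i : ℤ) * (A i : ℤ)) = x}.ncard

/-- For pairwise coprime positive `a`, with `Π = ∏ aᵢ`, `Aⱼ = Π / aⱼ`, `Σ = ∑ Aⱼ`,
the number `(k+t-1)·Π − Σ` has exactly `C(k+t-2, k-1)` representations
in terms of `(A₁, …, A_k)`. -/
theorem stmt0 (k t : ℕ) (hk : 1 ≤ k) (ht : 1 ≤ t)
    (a : Fin k → ℕ) (ha : ∀ i, 0 < a i)
    (hcop : ∀ i j, i ≠ j → Nat.Coprime (a i) (a j)) :
    numRep (fun i => (∏ j, a j) / a i)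
      (((k : ℤ) + (t : ℤ) - 1) * ((∏ j, a j : ℕ) : ℤ)
        - ((∑ i, (∏ j, a j) / a i : ℕ) : ℤ))
      = Nat.choose (k + t - 2) (k - 1) := by
  set P : ℕ := ∏ j, a j with hPdef
  set A : Fin k → ℕ := fun i => P / a i with hAdef
  have hdvd : ∀ i, a i ∣ P := fun i => Finset.dvd_prod_of_mem a (Finset.mem_univ i)
  have hP : 0 < P := Finset.prod_pos (fun i _ => ha i)
  have hAa : ∀ i, A i * a i = P := fun i => Nat.div_mul_cancel (hdvd i)
  have hAprod : ∀ i, A i = ∏ j ∈ Finset.univ.erase i, a j := by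
    intro i
    have h := Finset.mul_prod_erase Finset.univ a (Finset.mem_univ i)
    show P / a i = _
    rw [hPdef, ← h, Nat.mul_div_cancel_left _ (ha i)]
  have hiA : ∀ i j, i ≠ j → a i ∣ A j := by
    intro i j hij
    rw [hAprod j]
    exact Finset.dvd_prod_of_mem a (Finset.mem_erase.2 ⟨hij, Finset.mem_univ i⟩)
  have hcopA : ∀ i, Nat.Coprime (a i) (A i) := by
    intro i
    rw [hAprod i]
    exact Nat.Coprime.prod_right fun j hj => hcop i j (Ne.symm (Finset.mem_erase.1 hj).1)
  have hcastA : ((∑ i, A i : ℕ) : ℤ) = ∑ i, (A i : ℤ) := by push_cast; rfl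
  set f : (Fin k → ℕ) → (Fin k → ℕ) := fun n i => a i * (n i + 1) - 1 with hfdef
  have hfpos : ∀ (n : Fin k → ℕ) i, 1 ≤ a i * (n i + 1) :=
    fun n i => Nat.one_le_iff_ne_zero.2 (Nat.mul_ne_zero (ha i).ne' (Nat.succ_ne_zero _))
  have hfinj : Function.Injective f := by
    intro n n' h
    funext i
    have h1 : a i * (n i + 1) - 1 = a i * (n' i + 1) - 1 := congrFun h i
    have p1 := hfpos n i
    have p2 := hfpos n' i
    have h2 : a i * (n i + 1) = a i * (n' i + 1) := by omega
    have := Nat.eq_of_mul_eq_mul_left (ha i) h2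
    omega
  have hseteq : {m : Fin k → ℕ | (∑ i, (m i : ℤ) * (A i : ℤ)) =
      (((k : ℤ) + (t : ℤ) - 1) * (P : ℤ) - ((∑ i, A i : ℕ) : ℤ))} =
      f '' {n : Fin k → ℕ | ∑ i, n i = t - 1} := by
    ext m
    simp only [Set.mem_setOf_eq, Set.mem_image]
    constructor
    · intro hm
      have hci : ∀ i, a i ∣ m i + 1 := by
        intro i
        have h1 : (m i : ℤ) * A i + ∑ j ∈ Finset.univ.erase i, (m j : ℤ) * A j
            = ((k : ℤ) + (t : ℤ) - 1) * (P : ℤ) - ((∑ i, A i : ℕ) : ℤ) :=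
          (Finset.add_sum_erase Finset.univ (fun j => (m j : ℤ) * (A j : ℤ))
            (Finset.mem_univ i)).trans hm
        have h2 : (A i : ℤ) + ∑ j ∈ Finset.univ.erase i, (A j : ℤ)
            = ((∑ i, A i : ℕ) : ℤ) :=
          (Finset.add_sum_erase Finset.univ (fun j => (A j : ℤ))
            (Finset.mem_univ i)).trans hcastA.symm
        have e1 : ((m i : ℤ) + 1) * A i = ((k : ℤ) + (t : ℤ) - 1) * (P : ℤ)
            - (∑ j ∈ Finset.univ.erase i, ((m j : ℤ) * A j + (A j : ℤ))) := by
          rw [Finset.sum_add_distrib]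
          linear_combination h1 + h2
        have hdz : (a i : ℤ) ∣ ((m i : ℤ) + 1) * A i := by
          rw [e1]
          refine dvd_sub (Dvd.dvd.mul_left (Int.natCast_dvd_natCast.2 (hdvd i)) _) ?_
          refine Finset.dvd_sum fun j hj => ?_
          have hij : i ≠ j := fun h => (Finset.mem_erase.1 hj).1 h.symm
          exact dvd_add (Dvd.dvd.mul_left (Int.natCast_dvd_natCast.2 (hiA i j hij)) _)
            (Int.natCast_dvd_natCast.2 (hiA i j hij))
        have hdn : a i ∣ (m i + 1) * A i := by
          have : ((a i : ℤ)) ∣ (((m i + 1) * A i : ℕ) : ℤ) := by push_cast; exact hdz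
          exact_mod_cast this
        exact (hcopA i).dvd_of_dvd_mul_right hdn
      set c : Fin k → ℕ := fun i => (m i + 1) / a i with hcdef
      have hc : ∀ i, a i * c i = m i + 1 := fun i => Nat.mul_div_cancel' (hci i)
      have hc1 : ∀ i, 1 ≤ c i := by
        intro i
        rcases Nat.eq_zero_or_pos (c i) with h | h
        · exfalso; have := hc i; rw [h, Nat.mul_zero] at this; omega
        · exact h
      have hterm : ∀ i, (c i : ℤ) * P = (m i : ℤ) * (A i : ℤ) + (A i : ℤ) := by
        intro i
        have hca : (a i : ℤ) * (c i : ℤ) = (m i : ℤ) + 1 := by exact_mod_cast hc i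
        have hPa : (A i : ℤ) * (a i : ℤ) = (P : ℤ) := by exact_mod_cast hAa i
        calc (c i : ℤ) * P = (c i : ℤ) * ((A i : ℤ) * (a i : ℤ)) := by rw [hPa]
          _ = (A i : ℤ) * ((a i : ℤ) * (c i : ℤ)) := by ring
          _ = (A i : ℤ) * ((m i : ℤ) + 1) := by rw [hca]
          _ = _ := by ring
      have key2 : (∑ i, (c i : ℤ)) * (P : ℤ) = ((k : ℤ) + (t : ℤ) - 1) * (P : ℤ) := by
        rw [Finset.sum_mul]
        calc ∑ i, (c i : ℤ) * P = ∑ i, ((m i : ℤ) * (A i : ℤ) + (A i : ℤ)) :=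
              Finset.sum_congr rfl (fun i _ => hterm i)
          _ = (∑ i, (m i : ℤ) * (A i : ℤ)) + ∑ i, (A i : ℤ) := Finset.sum_add_distrib
          _ = _ := by rw [hm, ← hcastA]; ring
      have hsumc : ∑ i, (c i : ℤ) = (k : ℤ) + (t : ℤ) - 1 :=
        mul_right_cancel₀ (by exact_mod_cast hP.ne') key2
      refine ⟨fun i => c i - 1, ?_, ?_⟩
      · have hnat : ∑ i, c i = k + (t - 1) := by
          have hz : ((∑ i, c i : ℕ) : ℤ) = ((k + (t - 1) : ℕ) : ℤ) := by
            push_cast [Nat.cast_sub ht]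
            rw [hsumc]; ring
          exact_mod_cast hz
        show ∑ i, (c i - 1) = t - 1
        have h4 : ∑ i, ((c i - 1) + 1) = ∑ i, c i :=
          Finset.sum_congr rfl (fun i _ => by have := hc1 i; omega)
        rw [Finset.sum_add_distrib, Finset.sum_const, Finset.card_univ,
          Fintype.card_fin, smul_eq_mul, mul_one] at h4
        omega
      · funext i
        show a i * ((c i - 1) + 1) - 1 = m i
        have h1 := hc i
        have h2 := hc1 i
        have h3 : a i * (c i - 1 + 1) = a i * c i := by congr 1; omega
        omega
    · rintro ⟨n, hn, rfl⟩
      have hterm : ∀ i, ((f n i : ℕ) : ℤ) * (A i : ℤ)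
          = ((n i : ℤ) + 1) * ((a i : ℤ) * (A i : ℤ)) - (A i : ℤ) := by
        intro i
        have h1 : ((f n i : ℕ) : ℤ) = (a i : ℤ) * ((n i : ℤ) + 1) - 1 := by
          show ((a i * (n i + 1) - 1 : ℕ) : ℤ) = _
          push_cast [Nat.cast_sub (hfpos n i)]
          ring
        rw [h1]; ring
      rw [Finset.sum_congr rfl (fun i _ => hterm i)]
      have hPA : ∀ i, (a i : ℤ) * (A i : ℤ) = (P : ℤ) := by
        intro i; rw [mul_comm]; exact_mod_cast hAa i
      simp_rw [hPA]
      rw [Finset.sum_sub_distrib, ← Finset.sum_mul]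
      have hsn : ∑ i, ((n i : ℤ) + 1) = (k : ℤ) + (t : ℤ) - 1 := by
        rw [Finset.sum_add_distrib, Finset.sum_const, Finset.card_univ, Fintype.card_fin]
        have hz : ((∑ i, n i : ℕ) : ℤ) = ((t - 1 : ℕ) : ℤ) := by exact_mod_cast hn
        push_cast [Nat.cast_sub ht] at hz
        rw [hz]
        ring
      rw [hsn, ← hcastA]
  show ({m : Fin k → ℕ | _} : Set _).ncard = _
  rw [hseteq, Set.ncard_image_of_injective _ hfinj, ncard_sum_eq, Nat.multichoose_eq]
  have h1 : k + (t - 1) - 1 = k + t - 2 := by omega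
  rw [h1]
  have h2 : t - 1 = (k + t - 2) - (k - 1) := by omega
  rw [h2, Nat.choose_symm (by omega)]
end

section
/- Let k ≥ 1, let a_1, …, a_k be pairwise relatively prime positive integers, and let t ≥ 1 be an integer. Then every integer n with n > (k+t-1)·Π − Σ has at least C(k+t-1, k-1) representations in terms of (A_1, …, A_k). -/
/-- Every integer larger than `(k+t-1)·Π − Σ` has at least `C(k+t-1, k-1)`
representations in terms of `(A₁, …, A_k)`. -/
theorem stmt1 (k t : ℕ) (hk : 1 ≤ k) (ht : 1 ≤ t)
    (a : Fin k → ℕ) (ha : ∀ i, 0 < a i)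
    (hcop : ∀ i j, i ≠ j → Nat.Coprime (a i) (a j)) :
    ∀ n : ℤ,
      n > ((k : ℤ) + (t : ℤ) - 1) * ((∏ j, a j : ℕ) : ℤ)
            - ((∑ i, (∏ j, a j) / a i : ℕ) : ℤ) →
      Nat.choose (k + t - 1) (k - 1) ≤ numRep (fun i => (∏ j, a j) / a i) n := by
  intro n hn
  set P : ℕ := ∏ j, a j with hP
  set A : Fin k → ℕ := fun i => P / a i with hA
  have hPpos : 0 < P := Finset.prod_pos (fun i _ => ha i)
  have hdvd : ∀ i, a i ∣ P := fun i => Finset.dvd_prod_of_mem a (Finset.mem_univ i)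
  have haA : ∀ i, a i * A i = P := fun i => Nat.mul_div_cancel' (hdvd i)
  have hApos : ∀ i, 0 < A i := fun i =>
    Nat.div_pos (Nat.le_of_dvd hPpos (hdvd i)) (ha i)
  have hAerase : ∀ i, A i = ∏ j ∈ Finset.univ.erase i, a j := by
    intro i
    have h := Finset.mul_prod_erase Finset.univ a (Finset.mem_univ i)
    simp only [hA]
    rw [hP, ← h, Nat.mul_div_cancel_left _ (ha i)]
  have hcopA : ∀ i, Nat.Coprime (a i) (A i) := by
    intro i
    rw [hAerase i]
    exact Nat.Coprime.prod_right fun j hj => hcop i j (Finset.ne_of_mem_erase hj).symm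
  have hadvdA : ∀ i j, i ≠ j → a i ∣ A j := by
    intro i j hij
    rw [hAerase j]
    exact Finset.dvd_prod_of_mem a (by simp [hij])
  -- residues
  set r : Fin k → ℕ := fun i => (((A i : ZMod (a i)))⁻¹ * (n : ZMod (a i))).val with hr
  have hrlt : ∀ i, r i < a i := by
    intro i
    haveI : NeZero (a i) := ⟨(ha i).ne'⟩
    exact ZMod.val_lt _
  have hrmod : ∀ i, (r i : ZMod (a i)) * (A i : ZMod (a i)) = (n : ZMod (a i)) := by
    intro i
    haveI : NeZero (a i) := ⟨(ha i).ne'⟩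
    have h1 : (A i : ZMod (a i)) * (A i : ZMod (a i))⁻¹ = 1 :=
      ZMod.coe_mul_inv_eq_one _ (hcopA i).symm
    simp only [hr, ZMod.natCast_zmod_val]
    rw [mul_comm, ← mul_assoc, h1, one_mul]
  set S : ℤ := ∑ j, (r j : ℤ) * (A j : ℤ) with hS
  have hdvdsum : ∀ i, (a i : ℤ) ∣ (n - S) := by
    intro i
    haveI : NeZero (a i) := ⟨(ha i).ne'⟩
    rw [← ZMod.intCast_zmod_eq_zero_iff_dvd, hS]
    push_cast
    rw [Finset.sum_eq_single_of_mem i (Finset.mem_univ i)]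
    · rw [hrmod i, sub_self]
    · intro j _ hj
      have : ((A j : ℕ) : ZMod (a i)) = 0 :=
        (ZMod.natCast_eq_zero_iff _ _).mpr (hadvdA i j (Ne.symm hj))
      rw [this, mul_zero]
  have hPdvd : (P : ℤ) ∣ (n - S) := by
    have : ∏ i, (a i : ℤ) ∣ (n - S) := by
      apply Finset.prod_dvd_of_coprime
      · intro i _ j _ hij
        exact Nat.isCoprime_iff_coprime.mpr (hcop i j hij)
      · exact fun i _ => hdvdsum i
    rwa [← Nat.cast_prod] at this
  obtain ⟨c, hc⟩ := hPdvd
  -- bound on S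
  have hSle : S ≤ (k : ℤ) * P - (∑ i, (A i : ℕ) : ℤ) := by
    have h1 : S ≤ ∑ j, ((a j : ℤ) - 1) * (A j : ℤ) := by
      apply Finset.sum_le_sum
      intro j _
      have : (r j : ℤ) ≤ (a j : ℤ) - 1 := by
        have := hrlt j; omega
      exact mul_le_mul_of_nonneg_right this (by positivity)
    calc S ≤ ∑ j, ((a j : ℤ) - 1) * (A j : ℤ) := h1
      _ = ∑ j, ((a j : ℤ) * A j) - ∑ j, (A j : ℤ) := by
          rw [← Finset.sum_sub_distrib]; congr 1; ext j; ring
      _ = (k : ℤ) * P - (∑ i, (A i : ℕ) : ℤ) := by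
          congr 1
          · rw [Finset.sum_congr rfl
              (fun j _ => show (a j : ℤ) * (A j : ℤ) = (P : ℤ) by exact_mod_cast haA j)]
            simp [Finset.sum_const, Finset.card_univ, nsmul_eq_mul]
  have hSig : ((∑ i, A i : ℕ) : ℤ) = (∑ i, (A i : ℕ) : ℤ) := by push_cast; rfl
  have hct : (t : ℤ) ≤ c := by
    have h2 : ((t : ℤ) - 1) * P < (P : ℤ) * c := by
      rw [← hc]
      have : ((k : ℤ) + t - 1) * P - (∑ i, (A i : ℕ) : ℤ) < n := by
        rw [hSig] at hn; exact hn
      nlinarith [hSle, this]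
    have hPpos' : (0 : ℤ) < P := by exact_mod_cast hPpos
    nlinarith
  set N : ℕ := c.toNat with hN
  have hcN : (N : ℤ) = c := Int.toNat_of_nonneg (le_trans (by positivity) hct)
  have htN : t ≤ N := by
    have h : (t : ℤ) ≤ (N : ℤ) := by rw [hcN]; exact hct
    exact_mod_cast h
  -- the representation set
  set T : Set (Fin k → ℕ) := {m : Fin k → ℕ | (∑ i, (m i : ℤ) * (A i : ℤ)) = n} with hT
  have hSnonneg : 0 ≤ S := Finset.sum_nonneg fun j _ => by positivity
  have hPpos' : (0 : ℤ) < P := by exact_mod_cast hPpos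
  have ht' : (1 : ℤ) ≤ (t : ℤ) := by exact_mod_cast ht
  have hn0 : 0 ≤ n := by nlinarith [hc, hct]
  have hTfin : T.Finite := by
    apply Set.Finite.subset (Set.finite_Icc (0 : Fin k → ℕ) (fun _ => n.toNat))
    intro m hm
    simp only [hT, Set.mem_setOf_eq] at hm
    rw [Set.mem_Icc]
    refine ⟨fun i => Nat.zero_le _, fun i => ?_⟩
    have h1 : (m i : ℤ) * (A i : ℤ) ≤ n := by
      rw [← hm]
      exact Finset.single_le_sum (f := fun j => (m j : ℤ) * (A j : ℤ))
        (fun j _ => by positivity) (Finset.mem_univ i)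
    have hA1 : (1 : ℤ) ≤ (A i : ℤ) := by exact_mod_cast hApos i
    have h2 : (m i : ℤ) ≤ n := le_trans (by nlinarith [Int.natCast_nonneg (m i)]) h1
    exact (Int.le_toNat hn0).mpr h2
  set Φ : Sym (Fin k) N → (Fin k → ℕ) :=
    fun s i => r i + a i * Multiset.count i (s : Multiset (Fin k)) with hΦ
  have hΦmem : ∀ s, Φ s ∈ T := by
    intro s
    simp only [hT, Set.mem_setOf_eq, hΦ]
    have hsum : ∑ i, Multiset.count i (s : Multiset (Fin k)) = N := by
      rw [Multiset.sum_count_eq_card (fun x _ => Finset.mem_univ x)]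
      exact s.2
    have key : ∀ i : Fin k,
        (((r i + a i * Multiset.count i (s : Multiset (Fin k))) : ℕ) : ℤ) * (A i : ℤ)
        = (r i : ℤ) * (A i : ℤ) + (Multiset.count i (s : Multiset (Fin k)) : ℤ) * (P : ℤ) := by
      intro i
      have hP' : (a i : ℤ) * (A i : ℤ) = (P : ℤ) := by exact_mod_cast haA i
      push_cast
      calc ((r i : ℤ) + (a i : ℤ) * (Multiset.count i (s : Multiset (Fin k)) : ℤ)) * (A i : ℤ)
          = (r i : ℤ) * (A i : ℤ)
              + (Multiset.count i (s : Multiset (Fin k)) : ℤ) * ((a i : ℤ) * (A i : ℤ)) := by ring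
        _ = _ := by rw [hP']
    rw [Finset.sum_congr rfl (fun i _ => key i), Finset.sum_add_distrib, ← hS, ← Finset.sum_mul]
    have hsum' : (∑ i, (Multiset.count i (s : Multiset (Fin k)) : ℤ)) = (N : ℤ) := by
      exact_mod_cast congrArg (Nat.cast : ℕ → ℤ) hsum
    rw [hsum', hcN]
    linarith [hc]
  have hΦinj : Function.Injective Φ := by
    intro s s' h
    have hcount : ∀ i, Multiset.count i (s : Multiset (Fin k))
        = Multiset.count i (s' : Multiset (Fin k)) := by
      intro i
      have h' := congrFun h i
      simp only [hΦ] at h'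
      exact Nat.eq_of_mul_eq_mul_left (ha i) (by omega)
    exact Subtype.ext (Multiset.ext.mpr hcount)
  have hcard : Nat.card (Sym (Fin k) N) ≤ T.ncard := by
    haveI := hTfin.to_subtype
    rw [← Nat.card_coe_set_eq]
    exact Nat.card_le_card_of_injective (fun s => (⟨Φ s, hΦmem s⟩ : T))
      (fun s s' hss => hΦinj (congrArg Subtype.val hss))
  have hsym : Nat.card (Sym (Fin k) N) = (k + N - 1).choose N := by
    rw [Nat.card_eq_fintype_card, Sym.card_sym_eq_multichoose, Fintype.card_fin,
      Nat.multichoose_eq]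
  have hfinal : (k + t - 1).choose (k - 1) ≤ T.ncard := by
    calc (k + t - 1).choose (k - 1) ≤ (k + N - 1).choose (k - 1) :=
          Nat.choose_le_choose _ (by omega)
      _ = (k + N - 1).choose N := by
          have hNe : k + N - 1 - (k - 1) = N := by omega
          have h := Nat.choose_symm (show k - 1 ≤ k + N - 1 by omega)
          rw [hNe] at h
          exact h.symm
      _ ≤ T.ncard := hsym ▸ hcard
  exact hfinal
end

section
/- Let k ≥ 1, let a_1, …, a_k be pairwise relatively prime positive integers, let t ≥ 1 be an integer, and let s be an integer with C(k+t-2, k-1) ≤ s ≤ C(k+t-1, k-1) − 1. Then (k+t-1)·Π − Σ is the greatest integer having at most s representations in terms of (A_1, …, A_k); that is, g*_s(A_1, …, A_k) = (k+t-1)·Π − Σ. -/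
/-!
Write `Π = ∏ aᵢ` and `Aᵢ = Π / aᵢ`. Modulo `aⱼ`, every `Aᵢ` with `i ≠ j` vanishes and `Aⱼ` is a
unit, so every integer is `x = ∑ cᵢ Aᵢ + r Π` with `0 ≤ cᵢ < aᵢ`, `r ∈ ℤ`, and every representation
`m` of `x` has `mᵢ ≡ cᵢ (mod aᵢ)`. Hence the representations of `x` are exactly `m = c + a n` with
`n ∈ ℕᵏ`, `∑ nᵢ = r`, and by stars and bars there are `C(k + r - 1, k - 1)` of them, a number
increasing in `r`. The largest `x` with a given `r` is `∑ (aᵢ - 1) Aᵢ + r Π = (k + r) Π - Σ`, and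
`r = t - 1` is the largest `r` with at most `s` representations.
-/

open Finset Function

theorem ncard_setOf_sum_eq {ι : Type*} [Fintype ι] (r : ℕ) :
    {n : ι → ℕ | ∑ i, n i = r}.ncard = (Fintype.card ι + r - 1).choose r := by
  classical
  rw [← Nat.card_coe_set_eq, Set.coe_ofPred, ← Nat.card_congr (Sym.equivNatSumOfFintype ι r),
    Nat.card_eq_fintype_card, Sym.card_sym_eq_choose]

section ProdDiv

variable {ι : Type*} [Fintype ι] {a : ι → ℕ}

theorem mul_prod_div_self (i : ι) : a i * ((∏ j, a j) / a i) = ∏ j, a j :=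
  Nat.mul_div_cancel' (dvd_prod_of_mem a (mem_univ i))

theorem dvd_prod_div_of_ne (hcop : Pairwise (Nat.Coprime on a)) {i j : ι} (hij : i ≠ j) :
    a j ∣ (∏ l, a l) / a i := by
  refine (hcop hij.symm).dvd_of_dvd_mul_right ?_
  rw [Nat.div_mul_cancel (dvd_prod_of_mem a (mem_univ i))]
  exact dvd_prod_of_mem a (mem_univ j)

theorem coprime_prod_div_self (hcop : Pairwise (Nat.Coprime on a)) {j : ι} (hj : 0 < a j) :
    Nat.Coprime ((∏ i, a i) / a j) (a j) := by
  classical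
  rw [← prod_erase_mul univ a (mem_univ j), Nat.mul_div_cancel _ hj]
  exact Nat.Coprime.prod_left fun i hi => hcop (ne_of_mem_erase hi)

theorem intCast_sum_mul_prod_div (hcop : Pairwise (Nat.Coprime on a)) (m : ι → ℤ) (j : ι) :
    ((∑ i, m i * ((∏ l, a l) / a i : ℕ) : ℤ) : ZMod (a j))
      = m j * ((∏ l, a l) / a j : ℕ) := by
  simp only [Int.cast_sum, Int.cast_mul, Int.cast_natCast]
  refine sum_eq_single j (fun i _ hij => ?_) (fun h => absurd (mem_univ j) h)
  rw [(ZMod.natCast_eq_zero_iff _ _).2 (dvd_prod_div_of_ne hcop hij), mul_zero]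

theorem sum_add_mul_mul_prod_div (c n : ι → ℕ) :
    ∑ i, ((c i + a i * n i : ℕ) : ℤ) * ((∏ l, a l) / a i : ℕ)
      = ∑ i, (c i : ℤ) * ((∏ l, a l) / a i : ℕ) + (∏ l, a l : ℕ) * (∑ i, n i : ℕ) := by
  rw [Nat.cast_sum, mul_sum, ← sum_add_distrib]
  refine sum_congr rfl fun i _ => ?_
  have h : (a i : ℤ) * ((∏ l, a l) / a i : ℕ) = (∏ l, a l : ℕ) := mod_cast mul_prod_div_self i
  rw [Nat.cast_add, Nat.cast_mul]
  linear_combination (n i : ℤ) * h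

theorem exists_eq_sum_mul_prod_div_add (ha : ∀ i, 0 < a i) (hcop : Pairwise (Nat.Coprime on a))
    (x : ℤ) : ∃ c : ι → ℕ, (∀ j, c j < a j) ∧
      ∃ r : ℤ, x = ∑ i, (c i : ℤ) * ((∏ l, a l) / a i : ℕ) + (∏ l, a l : ℕ) * r := by
  have (j : ι) : NeZero (a j) := ⟨(ha j).ne'⟩
  refine ⟨fun j => ((x : ZMod (a j)) * (((∏ l, a l) / a j : ℕ) : ZMod (a j))⁻¹).val,
    fun j => ZMod.val_lt _, ?_⟩
  suffices h : ((∏ l, a l : ℕ) : ℤ) ∣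
      x - ∑ i, (((x : ZMod (a i)) * (((∏ l, a l) / a i : ℕ) : ZMod (a i))⁻¹).val : ℤ)
        * ((∏ l, a l) / a i : ℕ) by
    obtain ⟨r, hr⟩ := h
    exact ⟨r, by linear_combination hr⟩
  rw [Nat.cast_prod]
  refine Fintype.prod_dvd_of_coprime
    (fun i j hij => Nat.isCoprime_iff_coprime.2 (hcop hij)) fun j => ?_
  rw [← ZMod.intCast_zmod_eq_zero_iff_dvd, Int.cast_sub, intCast_sum_mul_prod_div hcop,
    sub_eq_zero, Int.cast_natCast, ZMod.natCast_zmod_val, mul_assoc, mul_comm _ (Nat.cast _),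
    ZMod.coe_mul_inv_eq_one _ (coprime_prod_div_self hcop (ha j)), mul_one]

theorem mod_eq_mod_of_sum_mul_prod_div_eq (ha : ∀ i, 0 < a i)
    (hcop : Pairwise (Nat.Coprime on a)) {m c : ι → ℕ} {r : ℤ}
    (h : ∑ i, (m i : ℤ) * ((∏ l, a l) / a i : ℕ)
      = ∑ i, (c i : ℤ) * ((∏ l, a l) / a i : ℕ) + (∏ l, a l : ℕ) * r) (j : ι) :
    m j % a j = c j % a j := by
  have hunit : IsUnit (((∏ l, a l) / a j : ℕ) : ZMod (a j)) :=
    (ZMod.unitOfCoprime _ (coprime_prod_div_self hcop (ha j))).isUnit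
  have hj := congrArg (Int.cast : ℤ → ZMod (a j)) h
  rw [Int.cast_add, intCast_sum_mul_prod_div hcop, intCast_sum_mul_prod_div hcop, Int.cast_mul,
    Int.cast_natCast (∏ l, a l), (ZMod.natCast_eq_zero_iff _ _).2 (dvd_prod_of_mem a (mem_univ j)),
    zero_mul, add_zero, hunit.mul_left_inj] at hj
  exact (ZMod.natCast_eq_natCast_iff' _ _ _).1 (mod_cast hj)

theorem setOf_sum_mul_prod_div_eq_image (ha : ∀ i, 0 < a i) (hcop : Pairwise (Nat.Coprime on a))
    {c : ι → ℕ} (hc : ∀ j, c j < a j) (r : ℕ) :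
    {m : ι → ℕ | ∑ i, (m i : ℤ) * ((∏ l, a l) / a i : ℕ)
        = ∑ i, (c i : ℤ) * ((∏ l, a l) / a i : ℕ) + (∏ l, a l : ℕ) * r}
      = (fun (n : ι → ℕ) j => c j + a j * n j) '' {n | ∑ i, n i = r} := by
  ext m
  constructor
  · intro hm
    have hm_eq : (fun j => c j + a j * (m j / a j)) = m := funext fun j => by
      rw [← Nat.mod_eq_of_lt (hc j), ← mod_eq_mod_of_sum_mul_prod_div_eq ha hcop hm j,
        Nat.mod_add_div]
    refine ⟨fun j => m j / a j, ?_, hm_eq⟩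
    rw [Set.mem_ofPred_eq, ← hm_eq] at hm
    beta_reduce at hm
    rw [sum_add_mul_mul_prod_div] at hm
    have hP : ((∏ l, a l : ℕ) : ℤ) ≠ 0 := by exact_mod_cast (prod_pos fun i _ => ha i).ne'
    exact_mod_cast mul_left_cancel₀ hP (add_left_cancel hm)
  · rintro ⟨n, hn, rfl⟩
    rw [Set.mem_ofPred_eq, ← hn, ← sum_add_mul_mul_prod_div]

theorem sum_pred_mul_prod_div (ha : ∀ i, 0 < a i) :
    ∑ i, ((a i - 1 : ℕ) : ℤ) * ((∏ l, a l) / a i : ℕ)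
      = Fintype.card ι * (∏ l, a l : ℕ) - ((∑ i, (∏ l, a l) / a i : ℕ) : ℤ) := by
  have h (i : ι) : ((a i - 1 : ℕ) : ℤ) * ((∏ l, a l) / a i : ℕ)
      = (∏ l, a l : ℕ) - ((∏ l, a l) / a i : ℕ) := by
    rw [Nat.cast_sub (ha i), Nat.cast_one, sub_one_mul, ← Nat.cast_mul, mul_prod_div_self]
  rw [sum_congr rfl fun i _ => h i, sum_sub_distrib, sum_const, card_univ, nsmul_eq_mul,
    Nat.cast_sum]

end ProdDiv

theorem numRep_sum_mul_prod_div_add {k : ℕ} {a : Fin k → ℕ} (ha : ∀ i, 0 < a i)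
    (hcop : Pairwise (Nat.Coprime on a)) {c : Fin k → ℕ} (hc : ∀ j, c j < a j) (r : ℕ) :
    numRep (fun i => (∏ j, a j) / a i)
        (∑ i, (c i : ℤ) * ((∏ j, a j) / a i : ℕ) + (∏ j, a j : ℕ) * r)
      = (k + r - 1).choose r := by
  have hinj : Injective fun (n : Fin k → ℕ) j => c j + a j * n j := fun n n' h =>
    funext fun j => Nat.eq_of_mul_eq_mul_left (ha j) (Nat.add_left_cancel (congrFun h j))
  rw [numRep, setOf_sum_mul_prod_div_eq_image ha hcop hc, Set.ncard_image_of_injective _ hinj,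
    ncard_setOf_sum_eq, Fintype.card_fin]

/-- For `C(k+t-2, k-1) ≤ s ≤ C(k+t-1, k-1) − 1`, the number `(k+t-1)·Π − Σ` is
the greatest integer with at most `s` representations in terms of `(A₁, …, A_k)`. -/
theorem stmt3 (k t : ℕ) (hk : 1 ≤ k) (ht : 1 ≤ t)
    (a : Fin k → ℕ) (ha : ∀ i, 0 < a i)
    (hcop : ∀ i j, i ≠ j → Nat.Coprime (a i) (a j))
    (s : ℕ) (hs₁ : Nat.choose (k + t - 2) (k - 1) ≤ s)
    (hs₂ : s ≤ Nat.choose (k + t - 1) (k - 1) - 1) :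
    IsGreatest
      {x : ℤ | numRep (fun i => (∏ j, a j) / a i) x ≤ s}
      (((k : ℤ) + (t : ℤ) - 1) * ((∏ j, a j : ℕ) : ℤ)
        - ((∑ i, (∏ j, a j) / a i : ℕ) : ℤ)) := by
  have hcop' : Pairwise (Nat.Coprime on a) := fun i j => hcop i j
  have hchoose (r : ℕ) : (k + r - 1).choose r = (k + r - 1).choose (k - 1) :=
    Nat.choose_symm_of_eq_add (by omega)
  have hP : 0 < ((∏ j, a j : ℕ) : ℤ) := by exact_mod_cast prod_pos fun i _ => ha i
  have hmax : ((k : ℤ) + t - 1) * ((∏ j, a j : ℕ) : ℤ) - ((∑ i, (∏ j, a j) / a i : ℕ) : ℤ)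
      = ∑ i, ((a i - 1 : ℕ) : ℤ) * ((∏ j, a j) / a i : ℕ) + (∏ j, a j : ℕ) * (t - 1 : ℕ) := by
    rw [sum_pred_mul_prod_div ha, Fintype.card_fin, Nat.cast_sub ht, Nat.cast_one]
    ring
  refine ⟨?_, fun x hx => ?_⟩
  · rw [Set.mem_ofPred_eq, hmax,
      numRep_sum_mul_prod_div_add ha hcop' (fun j => Nat.sub_lt (ha j) one_pos), hchoose,
      show k + (t - 1) - 1 = k + t - 2 by omega]
    exact hs₁
  · obtain ⟨c, hc, r, rfl⟩ := exists_eq_sum_mul_prod_div_add ha hcop' x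
    rw [Set.mem_ofPred_eq] at hx
    by_contra! hlt
    have hcA : ∑ i, (c i : ℤ) * ((∏ j, a j) / a i : ℕ)
        ≤ ∑ i, ((a i - 1 : ℕ) : ℤ) * ((∏ j, a j) / a i : ℕ) :=
      sum_le_sum fun i _ => mul_le_mul_of_nonneg_right (by have := hc i; omega) (by positivity)
    rw [hmax] at hlt
    have hrt : ((t - 1 : ℕ) : ℤ) < r := lt_of_mul_lt_mul_left (by linarith) hP.le
    lift r to ℕ using (by omega)
    rw [numRep_sum_mul_prod_div_add ha hcop' hc, hchoose] at hx
    have hmono : (k + t - 1).choose (k - 1) ≤ (k + r - 1).choose (k - 1) :=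
      Nat.choose_le_choose _ (by omega)
    have hpos : 0 < (k + t - 1).choose (k - 1) := Nat.choose_pos (by omega)
    omega
end

section
/- Let k ≥ 1 and let a_1, …, a_k be pairwise relatively prime positive integers. Then k·Π − Σ has exactly one representation in terms of (A_1, …, A_k), namely the tuple with x_j = a_j − 1 for every j. -/
/-- `k·Π − Σ` has exactly one representation in terms of `(A₁, …, A_k)`,
namely the tuple `(a₁ − 1, …, a_k − 1)`. -/
theorem stmt5 (k : ℕ) (hk : 1 ≤ k)
    (a : Fin k → ℕ) (ha : ∀ i, 0 < a i)
    (hcop : ∀ i j, i ≠ j → Nat.Coprime (a i) (a j)) :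
    {m : Fin k → ℕ |
        (∑ i, (m i : ℤ) * (((∏ j, a j) / a i : ℕ) : ℤ))
          = (k : ℤ) * ((∏ j, a j : ℕ) : ℤ) - ((∑ i, (∏ j, a j) / a i : ℕ) : ℤ)}
      = {fun j => a j - 1} := by
  classical
  have hPpos : 0 < ∏ j, a j := Finset.prod_pos fun i _ => ha i
  have hA : ∀ i : Fin k, (∏ j, a j) / a i = ∏ j ∈ Finset.univ.erase i, a j := fun i =>
    Nat.div_eq_of_eq_mul_left (ha i) (Finset.prod_erase_mul _ _ (Finset.mem_univ i)).symm
  have hmul : ∀ i : Fin k, a i * ((∏ j, a j) / a i) = ∏ j, a j := fun i => by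
    rw [hA i]; exact Finset.mul_prod_erase _ _ (Finset.mem_univ i)
  have hdvd : ∀ i j : Fin k, i ≠ j → a j ∣ (∏ l, a l) / a i := fun i j hij => by
    rw [hA i]
    exact Finset.dvd_prod_of_mem _ (Finset.mem_erase.mpr ⟨Ne.symm hij, Finset.mem_univ j⟩)
  have hcopA : ∀ i : Fin k, Nat.Coprime (a i) ((∏ l, a l) / a i) := fun i => by
    rw [hA i]
    exact Nat.Coprime.prod_right fun j hj => hcop i j (Ne.symm (Finset.ne_of_mem_erase hj))
  have hkey : (k : ℤ) * ((∏ j, a j : ℕ) : ℤ) - ((∑ i, (∏ j, a j) / a i : ℕ) : ℤ)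
      = ∑ i, ((a i : ℤ) - 1) * (((∏ j, a j) / a i : ℕ) : ℤ) := by
    have h1 : ∀ i : Fin k, ((a i : ℤ) - 1) * (((∏ j, a j) / a i : ℕ) : ℤ)
        = ((∏ j, a j : ℕ) : ℤ) - (((∏ j, a j) / a i : ℕ) : ℤ) := by
      intro i
      rw [sub_mul, one_mul]
      congr 1
      exact_mod_cast congrArg (fun n : ℕ => (n : ℤ)) (hmul i)
    rw [Finset.sum_congr rfl (fun i _ => h1 i), Finset.sum_sub_distrib, Finset.sum_const,
      Finset.card_univ, Fintype.card_fin]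
    push_cast
    ring
  ext m
  simp only [Set.mem_setOf_eq, Set.mem_singleton_iff]
  constructor
  · intro h
    rw [hkey] at h
    have hsum0 : ∑ i, ((m i : ℤ) - ((a i : ℤ) - 1)) * (((∏ j, a j) / a i : ℕ) : ℤ) = 0 := by
      have hx : ∑ i, ((m i : ℤ) - ((a i : ℤ) - 1)) * (((∏ j, a j) / a i : ℕ) : ℤ)
          = (∑ i, (m i : ℤ) * (((∏ j, a j) / a i : ℕ) : ℤ))
            - ∑ i, ((a i : ℤ) - 1) * (((∏ j, a j) / a i : ℕ) : ℤ) := by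
        rw [← Finset.sum_sub_distrib]
        exact Finset.sum_congr rfl fun i _ => by ring
      rw [hx, h, sub_self]
    have hdvd2 : ∀ j : Fin k, (a j : ℤ) ∣ ((m j : ℤ) - ((a j : ℤ) - 1)) := by
      intro j
      have hterm : (a j : ℤ) ∣ ((m j : ℤ) - ((a j : ℤ) - 1)) * (((∏ l, a l) / a j : ℕ) : ℤ) := by
        have hsplit := Finset.add_sum_erase Finset.univ
          (fun i => ((m i : ℤ) - ((a i : ℤ) - 1)) * (((∏ l, a l) / a i : ℕ) : ℤ))
          (Finset.mem_univ j)
        have hrest : (a j : ℤ) ∣ ∑ i ∈ Finset.univ.erase j,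
            ((m i : ℤ) - ((a i : ℤ) - 1)) * (((∏ l, a l) / a i : ℕ) : ℤ) := by
          refine Finset.dvd_sum fun i hi => Dvd.dvd.mul_left ?_ _
          exact_mod_cast Int.natCast_dvd_natCast.mpr (hdvd i j (Finset.ne_of_mem_erase hi))
        have : ((m j : ℤ) - ((a j : ℤ) - 1)) * (((∏ l, a l) / a j : ℕ) : ℤ)
            = (∑ i, ((m i : ℤ) - ((a i : ℤ) - 1)) * (((∏ l, a l) / a i : ℕ) : ℤ))
              - ∑ i ∈ Finset.univ.erase j,
                ((m i : ℤ) - ((a i : ℤ) - 1)) * (((∏ l, a l) / a i : ℕ) : ℤ) := by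
          rw [← hsplit]; ring
        rw [this, hsum0, zero_sub]
        exact dvd_neg.mpr hrest
      have hco : IsCoprime (a j : ℤ) (((∏ l, a l) / a j : ℕ) : ℤ) :=
        Nat.isCoprime_iff_coprime.mpr (hcopA j)
      exact hco.dvd_of_dvd_mul_right hterm
    choose c hc using hdvd2
    have hcnn : ∀ j : Fin k, 0 ≤ c j := by
      intro j
      by_contra hneg
      push_neg at hneg
      have h1 : c j ≤ -1 := by omega
      have h2 : (0 : ℤ) ≤ (m j : ℤ) := Int.natCast_nonneg _
      have h3 : (1 : ℤ) ≤ (a j : ℤ) := by exact_mod_cast ha j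
      nlinarith [hc j]
    have hsumc : ∑ j, c j = 0 := by
      have : (∑ j, c j) * ((∏ l, a l : ℕ) : ℤ) = 0 := by
        rw [Finset.sum_mul]
        rw [← hsum0]
        refine Finset.sum_congr rfl fun j _ => ?_
        rw [hc j]
        have := hmul j
        have hm : (a j : ℤ) * (((∏ l, a l) / a j : ℕ) : ℤ) = ((∏ l, a l : ℕ) : ℤ) := by
          exact_mod_cast congrArg (fun n : ℕ => (n : ℤ)) this
        rw [← hm]; ring
      have hPne : ((∏ l, a l : ℕ) : ℤ) ≠ 0 := by exact_mod_cast hPpos.ne'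
      exact (mul_eq_zero.mp this).resolve_right hPne
    have hczero : ∀ j : Fin k, c j = 0 := by
      intro j
      have := (Finset.sum_eq_zero_iff_of_nonneg (fun i _ => hcnn i)).mp hsumc j (Finset.mem_univ j)
      exact this
    funext j
    have := hc j
    rw [hczero j, mul_zero] at this
    have h3 : (1 : ℤ) ≤ (a j : ℤ) := by exact_mod_cast ha j
    have : (m j : ℤ) = ((a j - 1 : ℕ) : ℤ) := by
      rw [Nat.cast_sub (ha j)]
      push_cast
      omega
    exact_mod_cast this
  · intro h
    subst h
    rw [hkey]
    refine Finset.sum_congr rfl fun i _ => ?_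
    rw [Nat.cast_sub (ha i)]
    norm_num
end

section
/- Let k ≥ 1, let a_1, …, a_k be pairwise relatively prime positive integers, and let t ≥ 0 be an integer. If a nonnegative integer x has at least one representation in terms of (A_1, …, A_k), then x + t·Π has at least C(k+t-1, k-1) representations in terms of (A_1, …, A_k). -/
/-- Compositions of `t` into `k` parts are equinumerous with `Sym (Fin k) t`. -/
def compEquiv (k t : ℕ) : Sym (Fin k) t ≃ {c : Fin k → ℕ // ∑ i, c i = t} where
  toFun m := ⟨fun i => m.1.count i, by
    rw [Multiset.sum_count_eq_card (fun a _ => Finset.mem_univ a)]; exact m.2⟩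
  invFun c := ⟨∑ i, (c.1 i) • ({i} : Multiset (Fin k)), by
    simp [c.2]⟩
  left_inv m := by
    apply Subtype.ext
    have h := Multiset.toFinset_sum_count_nsmul_eq m.1
    conv_rhs => rw [← h]
    refine (Finset.sum_subset (Finset.subset_univ (Multiset.toFinset (m.1))) ?_).symm
    intro y _ hy
    show Multiset.count y m.1 • ({y} : Multiset (Fin k)) = 0
    rw [Multiset.count_eq_zero_of_notMem (by simpa using hy), zero_nsmul]
  right_inv c := by
    apply Subtype.ext
    funext i
    simp [Multiset.count_sum', Multiset.count_singleton, Finset.sum_ite_eq]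

theorem card_comp (k t : ℕ) (hk : 1 ≤ k) :
    Nat.card {c : Fin k → ℕ // ∑ i, c i = t} = Nat.choose (k + t - 1) (k - 1) := by
  rw [← Nat.card_congr (compEquiv k t), Nat.card_eq_fintype_card,
    Sym.card_sym_eq_multichoose, Fintype.card_fin, Nat.multichoose_eq]
  have h1 : k - 1 ≤ k + t - 1 := by omega
  have h2 : k + t - 1 - (k - 1) = t := by omega
  rw [← Nat.choose_symm h1, h2]

/-- If a nonnegative integer `x` has at least one representation in terms of
`(A₁, …, A_k)`, then `x + t·Π` has at least `C(k+t-1, k-1)` representations. -/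
theorem stmt6 (k t : ℕ) (hk : 1 ≤ k)
    (a : Fin k → ℕ) (ha : ∀ i, 0 < a i)
    (hcop : ∀ i j, i ≠ j → Nat.Coprime (a i) (a j))
    (x : ℕ) (hx : 1 ≤ numRep (fun i => (∏ j, a j) / a i) (x : ℤ)) :
    Nat.choose (k + t - 1) (k - 1)
      ≤ numRep (fun i => (∏ j, a j) / a i)
          ((x : ℤ) + (t : ℤ) * ((∏ j, a j : ℕ) : ℤ)) := by
  classical
  set P : ℕ := ∏ j, a j with hP
  set A : Fin k → ℕ := fun i => P / a i with hA
  have hPpos : 0 < P := Finset.prod_pos (fun i _ => ha i)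
  have hAa : ∀ i, A i * a i = P := fun i =>
    Nat.div_mul_cancel (Finset.dvd_prod_of_mem a (Finset.mem_univ i))
  have hApos : ∀ i, 0 < A i := fun i =>
    Nat.div_pos (Nat.le_of_dvd hPpos (Finset.dvd_prod_of_mem a (Finset.mem_univ i))) (ha i)
  -- a representation of x
  have hne : {m : Fin k → ℕ | (∑ i, (m i : ℤ) * (A i : ℤ)) = (x : ℤ)}.Nonempty := by
    rw [Set.nonempty_iff_ne_empty]
    intro h
    rw [numRep, h, Set.ncard_empty] at hx
    omega
  obtain ⟨m, hm⟩ := hne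
  set T : Set (Fin k → ℕ) :=
    {m' : Fin k → ℕ | (∑ i, (m' i : ℤ) * (A i : ℤ)) = (x : ℤ) + (t : ℤ) * (P : ℤ)} with hT
  -- T is finite
  have hTfin : T.Finite := by
    apply Set.Finite.subset (Set.Finite.pi (fun i : Fin k => Set.finite_Iic (x + t * P)))
    intro m' hm'
    simp only [Set.mem_pi, Set.mem_univ, Set.mem_Iic, forall_true_left]
    intro i
    have h1 : (m' i : ℤ) * (A i : ℤ) ≤ (x : ℤ) + (t : ℤ) * (P : ℤ) := by
      rw [← hm']
      exact Finset.single_le_sum (f := fun i => (m' i : ℤ) * (A i : ℤ))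
        (fun j _ => by positivity) (Finset.mem_univ i)
    have h2 : (m' i : ℤ) ≤ (m' i : ℤ) * (A i : ℤ) := by
      have : (1 : ℤ) ≤ (A i : ℤ) := by exact_mod_cast hApos i
      nlinarith [Int.ofNat_nonneg (m' i)]
    have : (m' i : ℤ) ≤ ((x + t * P : ℕ) : ℤ) := by push_cast; linarith
    exact_mod_cast this
  have : Finite ↥T := hTfin.to_subtype
  -- the injection
  set f : {c : Fin k → ℕ // ∑ i, c i = t} → ↥T := fun c =>
    ⟨fun i => m i + c.1 i * a i, by
      simp only [hT, Set.mem_setOf_eq]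
      push_cast
      simp only [add_mul]
      rw [Finset.sum_add_distrib]
      rw [hm]
      congr 1
      have : ∀ i ∈ Finset.univ, (c.1 i : ℤ) * (a i : ℤ) * (A i : ℤ)
          = (c.1 i : ℤ) * (P : ℤ) := by
        intro i _
        rw [mul_assoc]
        congr 1
        rw [mul_comm]
        exact_mod_cast congrArg (Nat.cast : ℕ → ℤ) (hAa i)
      rw [Finset.sum_congr rfl this, ← Finset.sum_mul]
      congr 1
      exact_mod_cast congrArg (Nat.cast : ℕ → ℤ) c.2⟩ with hf
  have hfinj : Function.Injective f := by
    intro c c' hcc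
    have := congrArg Subtype.val hcc
    apply Subtype.ext
    funext i
    have h := congrFun this i
    simp only [hf] at h
    have : c.1 i * a i = c'.1 i * a i := by omega
    exact Nat.eq_of_mul_eq_mul_right (ha i) this
  calc Nat.choose (k + t - 1) (k - 1)
      = Nat.card {c : Fin k → ℕ // ∑ i, c i = t} := (card_comp k t hk).symm
    _ ≤ Nat.card ↥T := Nat.card_le_card_of_injective f hfinj
    _ = T.ncard := (Nat.card_coe_set_eq T).symm
    _ = numRep A ((x : ℤ) + (t : ℤ) * (P : ℤ)) := rfl
end

section
/- Let a_1, …, a_k be positive integers with gcd(a_1, …, a_k) = 1 and let s ∈ ℕ. For each j with 0 ≤ j ≤ a_1 − 1, let n_{j,s} denote the least nonnegative integer congruent to j modulo a_1 that has more than s representations in terms of (a_1, …, a_k). Then max_{0 ≤ j ≤ a_1−1} n_{j,s} − a_1 is the greatest integer (in ℤ, where negative integers have zero representations) having at most s representations in terms of (a_1, …, a_k); that is, g*_s(a_1, …, a_k) = max_{0 ≤ j ≤ a_1−1} n_{j,s} − a_1. -/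
lemma repSet_finite {k : ℕ} (A : Fin k → ℕ) (hA : ∀ i, 0 < A i) (x : ℤ) :
    {m : Fin k → ℕ | (∑ i, (m i : ℤ) * (A i : ℤ)) = x}.Finite := by
  apply Set.Finite.subset (Set.Finite.pi (fun i : Fin k => Set.finite_Iic x.toNat))
  intro m hm
  simp only [Set.mem_pi, Set.mem_univ, Set.mem_Iic, forall_true_left]
  intro i
  have h1 : (m i : ℤ) ≤ x := by
    calc (m i : ℤ) ≤ (m i : ℤ) * A i := le_mul_of_one_le_right (by positivity)
          (by exact_mod_cast hA i)
    _ ≤ ∑ j, (m j : ℤ) * A j :=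
        Finset.single_le_sum (f := fun j => (m j : ℤ) * A j)
          (fun j _ => by positivity) (Finset.mem_univ i)
    _ = x := hm
  omega

lemma numRep_neg {k : ℕ} (A : Fin k → ℕ) (x : ℤ) (hx : x < 0) : numRep A x = 0 := by
  unfold numRep
  have hempty : {m : Fin k → ℕ | (∑ i, (m i : ℤ) * (A i : ℤ)) = x} = ∅ := by
    ext m
    simp only [Set.mem_setOf_eq, Set.mem_empty_iff_false, iff_false]
    intro hm
    have : (0:ℤ) ≤ ∑ j, (m j : ℤ) * A j := Finset.sum_nonneg (fun j _ => by positivity)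
    omega
  rw [hempty, Set.ncard_empty]

lemma numRep_le_add {k : ℕ} (A : Fin k → ℕ) (hA : ∀ i, 0 < A i) (x : ℤ) (i0 : Fin k) :
    numRep A x ≤ numRep A (x + A i0) := by
  unfold numRep
  refine Set.ncard_le_ncard_of_injOn (fun m => Function.update m i0 (m i0 + 1))
    ?_ ?_ (repSet_finite A hA _)
  · intro m hm
    simp only [Set.mem_setOf_eq] at hm ⊢
    have key : ∀ i : Fin k, ((Function.update m i0 (m i0 + 1) i : ℕ) : ℤ) * A i
        = (m i : ℤ) * A i + (if i = i0 then (A i0 : ℤ) else 0) := by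
      intro i
      rcases eq_or_ne i i0 with h | h
      · subst h; simp [Function.update_self]; push_cast; ring
      · simp [Function.update_of_ne h, h]
    rw [Finset.sum_congr rfl (fun i _ => key i), Finset.sum_add_distrib,
      Finset.sum_ite_eq' Finset.univ i0 (fun _ => (A i0 : ℤ)), hm]
    simp
  · intro m hm m' hm' h
    funext j
    rcases eq_or_ne j i0 with rfl | hj
    · have := congrFun h j
      simpa using this
    · have := congrFun h j
      simpa [Function.update_of_ne hj] using this

lemma numRep_le_add_mul {k : ℕ} (A : Fin k → ℕ) (hA : ∀ i, 0 < A i) (x : ℤ)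
    (i0 : Fin k) (t : ℕ) : numRep A x ≤ numRep A (x + t * A i0) := by
  induction t with
  | zero => simp
  | succ t ih =>
      have h2 := numRep_le_add A hA (x + t * A i0) i0
      have heq : x + ((t+1 : ℕ) : ℤ) * A i0 = x + (t:ℤ) * A i0 + A i0 := by push_cast; ring
      rw [heq]
      exact le_trans ih h2

/-- Brauer–Shockley lemma for `g*ₛ`: if `n j` is the least nonnegative integer
congruent to `j` mod `a₁` with more than `s` representations, then
`max_j n j − a₁` is the greatest integer with at most `s` representations. -/
theorem stmt7 (k : ℕ) (hk : 0 < k) (a : Fin k → ℕ) (ha : ∀ i, 0 < a i)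
    (hgcd : Finset.univ.gcd a = 1) (s : ℕ) (n : ℕ → ℕ)
    (hn : ∀ j < a ⟨0, hk⟩,
      IsLeast {x : ℕ | x % a ⟨0, hk⟩ = j ∧ s < numRep a (x : ℤ)} (n j)) :
    IsGreatest {x : ℤ | numRep a x ≤ s}
      ((((Finset.range (a ⟨0, hk⟩)).sup n : ℕ) : ℤ) - (a ⟨0, hk⟩ : ℤ)) := by
  set a0 := a ⟨0, hk⟩ with ha0def
  have ha0 : 0 < a0 := ha _
  set M := (Finset.range a0).sup n with hM
  obtain ⟨j0, hj0mem, hj0⟩ := Finset.exists_mem_eq_sup (Finset.range a0)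
    (Finset.nonempty_range_iff.mpr ha0.ne') n
  rw [Finset.mem_range] at hj0mem
  rw [← hM] at hj0
  have hmod : ∀ j, j < a0 → n j % a0 = j := fun j hj => (hn j hj).1.1
  have hrep : ∀ j, j < a0 → s < numRep a ((n j : ℤ)) := fun j hj => (hn j hj).1.2
  have hMge : a0 - 1 ≤ M := by
    have h1 : n (a0 - 1) % a0 = a0 - 1 := hmod _ (by omega)
    have h2 : n (a0 - 1) ≤ M := Finset.le_sup (Finset.mem_range.mpr (by omega))
    have := Nat.mod_le (n (a0 - 1)) a0
    omega
  constructor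
  · -- membership: numRep (M - a0) ≤ s
    simp only [Set.mem_setOf_eq]
    rcases lt_or_ge M a0 with h | h
    · rw [numRep_neg a _ (by omega)]; omega
    · by_contra hc
      push_neg at hc
      have hcast : ((M:ℤ) - a0) = ((M - a0 : ℕ) : ℤ) := by push_cast; omega
      rw [hcast] at hc
      have h1 : M % a0 = j0 := by rw [hj0]; exact hmod j0 hj0mem
      have h3 : (M - a0) % a0 = M % a0 := by
        rw [← Nat.add_mod_right (M - a0) a0]
        congr 1
        omega
      have hle := (hn j0 hj0mem).2 ⟨by omega, hc⟩
      omega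
  · -- upper bound
    intro y hy
    simp only [Set.mem_setOf_eq] at hy
    by_contra hcon
    push_neg at hcon
    have hy0 : 0 ≤ y := by omega
    set j := y.toNat % a0 with hjdef
    have hjlt : j < a0 := Nat.mod_lt _ ha0
    have hnj : n j ≤ M := Finset.le_sup (Finset.mem_range.mpr hjlt)
    have h1 : (y.toNat : ℤ) % a0 = j := by rw [hjdef]; push_cast; rfl
    have h2 : (n j : ℤ) % a0 = j := by exact_mod_cast hmod j hjlt
    have hymod : y % (a0:ℤ) = (n j : ℤ) % a0 := by
      conv_lhs => rw [← Int.toNat_of_nonneg hy0]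
      rw [h1, h2]
    have hdvd : (a0:ℤ) ∣ (y - n j) := (Int.ModEq.symm hymod).dvd
    obtain ⟨c, hcc⟩ := hdvd
    have hnjM : (n j : ℤ) ≤ M := by exact_mod_cast hnj
    have ha0z : (0:ℤ) < a0 := by exact_mod_cast ha0
    have hc0 : 0 ≤ c := by nlinarith [hcc, hcon, hnjM, ha0z]
    have hyeq : (n j : ℤ) + (c.toNat : ℤ) * (a0 : ℤ) = y := by
      rw [Int.toNat_of_nonneg hc0]
      linarith [hcc, mul_comm c (a0:ℤ)]
    have hmono := numRep_le_add_mul a ha ((n j : ℤ)) ⟨0, hk⟩ c.toNat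
    rw [← ha0def, hyeq] at hmono
    have := hrep j hjlt
    omega
end

section
/- Let a_1, …, a_k be positive integers with gcd(a_1, …, a_k) = 1 and let s ∈ ℕ. Then the number n*_s(a_1, …, a_k) of nonnegative integers having at most s representations in terms of (a_1, …, a_k) satisfies n*_s(a_1, …, a_k) = (1/a_1)·∑_{j=0}^{a_1−1} n_{j,s} − (a_1 − 1)/2; equivalently, 2·a_1·n*_s(a_1, …, a_k) = 2·∑_{j=0}^{a_1−1} n_{j,s} − a_1·(a_1 − 1). -/
open Finset

lemma finite_setOf_sum_mul_eq {k : ℕ} {A : Fin k → ℕ} (hA : ∀ i, 0 < A i) (x : ℤ) :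
    {m : Fin k → ℕ | (∑ i, (m i : ℤ) * (A i : ℤ)) = x}.Finite := by
  refine (Set.Finite.pi fun _ => Set.finite_Iic x.toNat).subset fun m hm i _ => ?_
  have hle : (m i : ℤ) * A i ≤ x :=
    hm ▸ single_le_sum (f := fun i => (m i : ℤ) * A i) (fun _ _ => by positivity) (mem_univ i)
  have hmul : (m i : ℤ) ≤ m i * A i :=
    le_mul_of_one_le_right (by positivity) (by exact_mod_cast hA i)
  simp only [Set.mem_Iic]
  omega

lemma numRep_le_numRep_add {k : ℕ} {A : Fin k → ℕ} (hA : ∀ i, 0 < A i) (i : Fin k) (x : ℤ) :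
    numRep A x ≤ numRep A (x + A i) := by
  classical
  refine Set.ncard_le_ncard_of_injOn (· + Pi.single i 1) (fun m hm => ?_)
    (add_left_injective _).injOn (finite_setOf_sum_mul_eq hA _)
  simp only [Set.mem_ofPred_eq] at hm ⊢
  simp [add_mul, sum_add_distrib, hm, Pi.single_apply]

lemma ncard_setOf_lt_apply_mod {d : ℕ} (hd : 0 < d) {n : ℕ → ℕ} (hn : ∀ j < d, n j % d = j) :
    {x : ℕ | x < n (x % d)}.ncard = ∑ j ∈ range d, n j / d := by
  have hset : {x : ℕ | x < n (x % d)}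
      = ↑((range d).biUnion fun j => {x ∈ range (n j) | x ≡ j [MOD d]}) := by
    ext x
    simp only [Set.mem_ofPred_eq, mem_coe, mem_biUnion, Finset.mem_filter, Finset.mem_range]
    unfold Nat.ModEq
    constructor
    · exact fun hx => ⟨x % d, Nat.mod_lt x hd, hx, (Nat.mod_mod x d).symm⟩
    · rintro ⟨j, hj, hx, hxj⟩
      rwa [hxj, Nat.mod_eq_of_lt hj]
  rw [hset, Set.ncard_coe_finset, card_biUnion]
  · refine sum_congr rfl fun j hj => ?_
    have hj : j < d := mem_range.mp hj
    rw [← Nat.count_eq_card_filter_range, Nat.count_modEq_card _ hd, hn j hj, Nat.mod_eq_of_lt hj]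
    simp
  · intro j hj j' hj' hne
    refine disjoint_left.mpr fun x hx hx' => hne ?_
    simp only [Finset.mem_filter] at hx hx'
    unfold Nat.ModEq at hx hx'
    rw [← Nat.mod_eq_of_lt (mem_range.mp hj), ← Nat.mod_eq_of_lt (mem_range.mp hj'),
      ← hx.2, ← hx'.2]

lemma setOf_not_eq_setOf_lt_apply_mod {P : ℕ → Prop} {d : ℕ} (hd : 0 < d)
    (hP : ∀ x, P x → P (x + d)) {n : ℕ → ℕ}
    (hn : ∀ j < d, IsLeast {x | x % d = j ∧ P x} (n j)) :
    {x | ¬ P x} = {x | x < n (x % d)} := by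
  have hP_add_mul : ∀ t x, P x → P (x + d * t) := by
    intro t
    induction t with
    | zero => simp
    | succ t ih => exact fun x hx => by simpa [Nat.mul_succ, ← add_assoc] using hP _ (ih x hx)
  ext x
  obtain ⟨⟨hmod, hPn⟩, hleast⟩ := hn (x % d) (Nat.mod_lt x hd)
  simp only [Set.mem_ofPred_eq]
  constructor
  · intro hx
    by_contra! hge
    obtain ⟨t, ht⟩ := (Nat.modEq_iff_dvd' hge).mp hmod
    exact hx (by simpa [← ht, Nat.add_sub_cancel' hge] using hP_add_mul t _ hPn)
  · exact fun hx hPx => (hleast ⟨rfl, hPx⟩).not_gt hx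

lemma two_mul_mul_sum_div_eq {d : ℕ} {n : ℕ → ℕ} (hn : ∀ j < d, n j % d = j) :
    2 * (d : ℤ) * ((∑ j ∈ range d, n j / d : ℕ) : ℤ)
      = 2 * ∑ j ∈ range d, (n j : ℤ) - d * (d - 1) := by
  have hgauss : 2 * ∑ j ∈ range d, (j : ℤ) = d * (d - 1) := by
    clear hn
    induction d with
    | zero => simp
    | succ d ih => rw [sum_range_succ, mul_add, ih]; push_cast; ring
  have hdiv : ∀ j ∈ range d, (d : ℤ) * (n j / d : ℕ) = n j - j := fun j hj => by
    have := Nat.div_add_mod (n j) d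
    rw [hn j (mem_range.mp hj)] at this
    omega
  rw [Nat.cast_sum, mul_assoc, mul_sum, sum_congr rfl hdiv, sum_sub_distrib, ← hgauss]
  ring

theorem stmt9_general (k : ℕ) (hk : 0 < k) (a : Fin k → ℕ) (ha : ∀ i, 0 < a i)
    (s : ℕ) (n : ℕ → ℕ)
    (hn : ∀ j < a ⟨0, hk⟩,
      IsLeast {x : ℕ | x % a ⟨0, hk⟩ = j ∧ s < numRep a (x : ℤ)} (n j)) :
    2 * (a ⟨0, hk⟩ : ℤ) * ({x : ℕ | numRep a (x : ℤ) ≤ s}.ncard : ℤ)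
      = 2 * (∑ j ∈ Finset.range (a ⟨0, hk⟩), (n j : ℤ))
        - (a ⟨0, hk⟩ : ℤ) * ((a ⟨0, hk⟩ : ℤ) - 1) := by
  have hclosed : ∀ x : ℕ, s < numRep a x → s < numRep a ↑(x + a ⟨0, hk⟩) := fun x hx =>
    hx.trans_le (by simpa using numRep_le_numRep_add ha ⟨0, hk⟩ x)
  have hset : {x : ℕ | numRep a x ≤ s} = {x | x < n (x % a ⟨0, hk⟩)} := by
    simp_rw [← not_lt]
    exact setOf_not_eq_setOf_lt_apply_mod (ha _) hclosed hn
  rw [hset, ncard_setOf_lt_apply_mod (ha _) fun j hj => (hn j hj).1.1]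
  exact two_mul_mul_sum_div_eq fun j hj => (hn j hj).1.1

/-- Selmer-type formula for `n*ₛ`, the number of nonnegative integers with at
most `s` representations: `2·a₁·n*ₛ = 2·∑_{j<a₁} n j − a₁·(a₁ − 1)`. -/
theorem stmt9 (k : ℕ) (hk : 0 < k) (a : Fin k → ℕ) (ha : ∀ i, 0 < a i)
    (hgcd : Finset.univ.gcd a = 1) (s : ℕ) (n : ℕ → ℕ)
    (hn : ∀ j < a ⟨0, hk⟩,
      IsLeast {x : ℕ | x % a ⟨0, hk⟩ = j ∧ s < numRep a (x : ℤ)} (n j)) :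
    2 * (a ⟨0, hk⟩ : ℤ) * ({x : ℕ | numRep a (x : ℤ) ≤ s}.ncard : ℤ)
      = 2 * (∑ j ∈ Finset.range (a ⟨0, hk⟩), (n j : ℤ))
        - (a ⟨0, hk⟩ : ℤ) * ((a ⟨0, hk⟩ : ℤ) - 1) :=
  stmt9_general k hk a ha s n hn
end

section
/- Let a_1, …, a_k be positive integers with gcd(a_1, …, a_k) = 1, let d = gcd(a_2, …, a_k), and write a_j = d·a_j' for 2 ≤ j ≤ k. Then for every s ∈ ℕ, g*_s(a_1, a_2, …, a_k) = d·g*_s(a_1, a_2', a_3', …, a_k') + a_1·(d − 1), where g*_s denotes the largest integer (in ℤ, where negative integers have zero representations) having at most s representations in terms of the indicated tuple. -/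
lemma sum_expand {k : ℕ} (m A : Fin (k+1) → ℕ) :
    (∑ i, (m i : ℤ) * (A i : ℤ)) = (m 0 : ℤ) * (A 0 : ℤ) + ∑ i : Fin k, (m (Fin.succ i) : ℤ) * (A (Fin.succ i) : ℤ) :=
  Fin.sum_univ_succ _

lemma key_numRep (k a₁ d : ℕ) (hd : 0 < d) (b b' : Fin k → ℕ)
    (hb' : ∀ i, b i = d * b' i) (hcop : Nat.Coprime a₁ d)
    (r : ℕ) (hr : r < d) (y : ℤ) :
    numRep (Fin.cons a₁ b) ((d : ℤ) * y + (r : ℤ) * a₁) = numRep (Fin.cons a₁ b') y := by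
  classical
  set f : (Fin (k+1) → ℕ) → (Fin (k+1) → ℕ) :=
    fun m => Fin.cons (r + d * m 0) (Fin.tail m) with hf
  have hbi : ∀ i : Fin k, ((b i : ℤ)) = (d : ℤ) * (b' i : ℤ) := by
    intro i; exact_mod_cast congrArg (Nat.cast : ℕ → ℤ) (hb' i)
  have hinj : Function.Injective f := by
    intro m n hmn
    have h0 : r + d * m 0 = r + d * n 0 := by
      have := congrFun hmn 0
      simpa [hf] using this
    have h0' : m 0 = n 0 := by
      have : d * m 0 = d * n 0 := by omega
      exact Nat.eq_of_mul_eq_mul_left hd this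
    funext i
    rcases Fin.eq_zero_or_eq_succ i with h | ⟨j, rfl⟩
    · subst h; exact h0'
    · have := congrFun hmn j.succ
      simpa [hf, Fin.tail] using this
  have himg : {m : Fin (k+1) → ℕ | (∑ i, (m i : ℤ) * ((Fin.cons a₁ b : Fin (k+1) → ℕ) i : ℤ)) = (d : ℤ) * y + (r : ℤ) * a₁}
      = f '' {m : Fin (k+1) → ℕ | (∑ i, (m i : ℤ) * ((Fin.cons a₁ b' : Fin (k+1) → ℕ) i : ℤ)) = y} := by
    ext m
    simp only [Set.mem_setOf_eq, Set.mem_image]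
    constructor
    · intro hm
      rw [sum_expand] at hm
      simp only [Fin.cons_zero, Fin.cons_succ] at hm
      have hm2 : (a₁ : ℤ) * ((m 0 : ℤ) - r) = (d : ℤ) * (y - ∑ i, (m i.succ : ℤ) * (b' i : ℤ)) := by
        have h1 : ∑ i, (m i.succ : ℤ) * (b i : ℤ) = (d : ℤ) * ∑ i, (m i.succ : ℤ) * (b' i : ℤ) := by
          rw [Finset.mul_sum]
          exact Finset.sum_congr rfl (fun i _ => by rw [hbi i]; ring)
        rw [h1] at hm
        linarith
      have hdvd : (d : ℤ) ∣ ((m 0 : ℤ) - r) := by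
        have h1 : (d : ℤ) ∣ (a₁ : ℤ) * ((m 0 : ℤ) - r) := Dvd.intro _ hm2.symm
        have hcop' : IsCoprime (d : ℤ) (a₁ : ℤ) := by
          rw [Int.isCoprime_iff_gcd_eq_one]
          simpa [Int.gcd, Nat.gcd_comm] using hcop
        exact hcop'.dvd_of_dvd_mul_left h1
      obtain ⟨t, ht⟩ := hdvd
      have hrd : (r : ℤ) < d := by exact_mod_cast hr
      have hm0 : (0 : ℤ) ≤ m 0 := Int.natCast_nonneg _
      have htnn : 0 ≤ t := by
        by_contra h
        push_neg at h
        have h1 : t ≤ -1 := by omega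
        have : (d : ℤ) * t ≤ (d : ℤ) * (-1) :=
          mul_le_mul_of_nonneg_left h1 (by positivity)
        linarith [ht]
      have hdne : (d : ℤ) ≠ 0 := by positivity
      have hat : (a₁ : ℤ) * t = y - ∑ i, (m i.succ : ℤ) * (b' i : ℤ) := by
        apply mul_left_cancel₀ hdne
        calc (d:ℤ) * ((a₁:ℤ) * t) = (a₁ : ℤ) * ((d:ℤ) * t) := by ring
          _ = (a₁ : ℤ) * ((m 0 : ℤ) - r) := by rw [← ht]
          _ = (d : ℤ) * (y - ∑ i, (m i.succ : ℤ) * (b' i : ℤ)) := hm2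
      have htc : (t.toNat : ℤ) = t := Int.toNat_of_nonneg htnn
      refine ⟨Fin.cons t.toNat (Fin.tail m), ?_, ?_⟩
      · rw [sum_expand]
        simp only [Fin.cons_zero, Fin.cons_succ, Fin.tail]
        rw [htc]
        linarith
      · simp only [hf, Fin.cons_zero, Fin.tail_cons]
        have h0 : r + d * t.toNat = m 0 := by
          have : ((r + d * t.toNat : ℕ) : ℤ) = (m 0 : ℤ) := by
            push_cast [htc]
            linarith [ht]
          exact_mod_cast this
        rw [h0, Fin.cons_self_tail]
    · rintro ⟨m', hm', rfl⟩
      rw [sum_expand] at hm' ⊢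
      simp only [Fin.cons_zero, Fin.cons_succ, hf, Fin.tail_cons] at hm' ⊢
      have h1 : ∑ i, ((m' i.succ : ℤ)) * (b i : ℤ) = (d : ℤ) * ∑ i, (m' i.succ : ℤ) * (b' i : ℤ) := by
        rw [Finset.mul_sum]
        exact Finset.sum_congr rfl (fun i _ => by rw [hbi i]; ring)
      have htail : ∑ i, ((Fin.tail m') i : ℤ) * (b i : ℤ) = ∑ i, (m' i.succ : ℤ) * (b i : ℤ) := rfl
      rw [htail, h1]
      push_cast
      nlinarith [hm']
  unfold numRep
  rw [himg, Set.ncard_image_of_injective _ hinj]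

/-- Johnson-type reduction for `g*ₛ`: with `d = gcd(a₂,…,a_k)` and `aⱼ = d·aⱼ'`,
we have `g*ₛ(a₁, a₂, …, a_k) = d·g*ₛ(a₁, a₂', …, a_k') + a₁·(d − 1)`. -/
theorem stmt10 (k : ℕ) (hk : 0 < k) (a₁ : ℕ) (ha₁ : 0 < a₁)
    (b b' : Fin k → ℕ) (hb : ∀ i, 0 < b i)
    (d : ℕ) (hd : d = Finset.univ.gcd b) (hb' : ∀ i, b i = d * b' i)
    (hgcd : Finset.univ.gcd (Fin.cons a₁ b) = 1)
    (s : ℕ) (G' : ℤ)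
    (hG' : IsGreatest {x : ℤ | numRep (Fin.cons a₁ b') x ≤ s} G') :
    IsGreatest {x : ℤ | numRep (Fin.cons a₁ b) x ≤ s}
      ((d : ℤ) * G' + (a₁ : ℤ) * ((d : ℤ) - 1)) := by
  have i0 : Fin k := ⟨0, hk⟩
  have hdpos : 0 < d := by
    rcases Nat.eq_zero_or_pos d with h | h
    · exfalso; have := hb i0; rw [hb' i0, h] at this; simp at this
    · exact h
  have hcop : Nat.Coprime a₁ d := by
    have hdvd : Nat.gcd a₁ d ∣ Finset.univ.gcd (Fin.cons a₁ b) := by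
      apply Finset.dvd_gcd
      intro i _
      rcases Fin.eq_zero_or_eq_succ i with h | ⟨j, rfl⟩
      · subst h; simpa using Nat.gcd_dvd_left a₁ d
      · rw [Fin.cons_succ, hb' j]
        exact Dvd.dvd.mul_right (Nat.gcd_dvd_right a₁ d) _
    rw [hgcd] at hdvd
    exact Nat.eq_one_of_dvd_one hdvd
  have hdZ : (1 : ℤ) ≤ (d : ℤ) := by exact_mod_cast hdpos
  constructor
  · -- membership
    show numRep (Fin.cons a₁ b) _ ≤ s
    have hcast : ((d : ℤ) * G' + (a₁ : ℤ) * ((d : ℤ) - 1)) = (d : ℤ) * G' + ((d - 1 : ℕ) : ℤ) * a₁ := by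
      have : ((d - 1 : ℕ) : ℤ) = (d : ℤ) - 1 := by
        push_cast [Nat.cast_sub hdpos]; ring
      rw [this]; ring
    rw [hcast, key_numRep k a₁ d hdpos b b' hb' hcop (d-1) (by omega) G']
    exact hG'.1
  · -- upper bound
    intro x hx
    simp only [Set.mem_setOf_eq] at hx
    have hcop' : IsCoprime (a₁ : ℤ) (d : ℤ) := by
      rw [Int.isCoprime_iff_gcd_eq_one]
      simpa [Int.gcd] using hcop
    obtain ⟨u, v, huv⟩ := hcop'
    set r0 : ℤ := (x * u) % d with hr0
    have hr0nn : 0 ≤ r0 := Int.emod_nonneg _ (by positivity)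
    have hr0lt : r0 < d := Int.emod_lt_of_pos _ (by exact_mod_cast hdpos)
    have hdvd0 : (d : ℤ) ∣ x * u - r0 := Int.dvd_self_sub_of_emod_eq rfl
    have hdvd : (d : ℤ) ∣ x - r0 * a₁ := by
      obtain ⟨w, hw⟩ := hdvd0
      refine ⟨w * a₁ + x * v, ?_⟩
      have hx1 : x = x * (u * a₁ + v * d) := by rw [huv]; ring
      calc x - r0 * a₁ = (x * u - r0) * a₁ + x * v * d := by
            nlinarith [hx1]
        _ = d * (w * a₁ + x * v) := by rw [hw]; ring
    obtain ⟨y, hy⟩ := hdvd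
    set r : ℕ := r0.toNat with hrdef
    have hrc : (r : ℤ) = r0 := Int.toNat_of_nonneg hr0nn
    have hrlt : r < d := by omega
    have hxdec : x = (d : ℤ) * y + (r : ℤ) * a₁ := by rw [hrc]; linarith [hy]
    have hnum : numRep (Fin.cons a₁ b') y ≤ s := by
      rw [← key_numRep k a₁ d hdpos b b' hb' hcop r hrlt y, ← hxdec]
      exact hx
    have hyle : y ≤ G' := hG'.2 hnum
    have hrle : (r : ℤ) ≤ (d : ℤ) - 1 := by omega
    have ha₁Z : (0 : ℤ) < a₁ := by exact_mod_cast ha₁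
    rw [hxdec]
    have h1 : (d : ℤ) * y ≤ (d : ℤ) * G' := mul_le_mul_of_nonneg_left hyle (by positivity)
    have h2 : (r : ℤ) * a₁ ≤ ((d : ℤ) - 1) * a₁ := mul_le_mul_of_nonneg_right hrle (by positivity)
    linarith
end

section
/- Let a_1, …, a_k be positive integers with gcd(a_1, …, a_k) = 1, let d = gcd(a_2, …, a_k), and write a_j = d·a_j' for 2 ≤ j ≤ k. Then for every s ∈ ℕ, n*_s(a_1, a_2, …, a_k) = d·n*_s(a_1, a_2', a_3', …, a_k') + (a_1 − 1)·(d − 1)/2, where n*_s denotes the number of nonnegative integers having at most s representations in terms of the indicated tuple; equivalently, 2·n*_s(a_1, …, a_k) = 2·d·n*_s(a_1, a_2', …, a_k') + (a_1 − 1)·(d − 1). -/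
lemma Fin.univ_gcd_cons {α : Type*} [CommMonoidWithZero α] [NormalizedGCDMonoid α]
    {k : ℕ} (a : α) (c : Fin k → α) :
    Finset.univ.gcd (Fin.cons a c : Fin (k + 1) → α) = gcd a (Finset.univ.gcd c) := by
  classical
  rw [Fin.univ_succ, Finset.gcd_cons, Fin.cons_zero, Finset.map_eq_image, Finset.gcd_image]
  rfl

lemma Nat.mul_div_add_sub_mul_div {a d r : ℕ} (had : a.Coprime d) (hr₀ : 0 < r) (hrd : r < d) :
    r * a / d + (d - r) * a / d = a - 1 := by
  have hρ : r * a % d ≠ 0 := fun h =>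
    Nat.not_dvd_of_pos_of_lt hr₀ hrd (had.symm.dvd_of_dvd_mul_right (Nat.dvd_of_mod_eq_zero h))
  have hdiv := Nat.div_add_mod (r * a) d
  have hρd := Nat.mod_lt (r * a) (by omega : 0 < d)
  have hq : r * a / d < a := Nat.div_lt_of_lt_mul (Nat.mul_lt_mul_of_pos_right hrd
    (Nat.pos_of_ne_zero fun h => by simp [h] at hρ))
  generalize r * a / d = q at *
  generalize r * a % d = ρ at *
  obtain ⟨t, rfl⟩ : ∃ t, a = q + 1 + t := ⟨a - (q + 1), by omega⟩
  obtain ⟨u, rfl⟩ : ∃ u, d = r + u := ⟨d - r, by omega⟩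
  rw [Nat.add_sub_cancel_left, Nat.div_eq_of_lt_le (k := t)]
    <;> [omega; nlinarith; nlinarith [Nat.pos_of_ne_zero hρ]]

lemma Nat.two_mul_sum_range_mul_div {a d : ℕ} (had : a.Coprime d) :
    2 * ∑ r ∈ Finset.range d, r * a / d = (a - 1) * (d - 1) := by
  obtain _ | e := d
  · simp
  have hreflect : ∑ j ∈ Finset.range e, (j + 1) * a / (e + 1)
      = ∑ j ∈ Finset.range e, (e + 1 - (j + 1)) * a / (e + 1) := by
    rw [← Finset.sum_range_reflect]
    refine Finset.sum_congr rfl fun j hj => ?_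
    rw [Finset.mem_range] at hj
    congr 2
    omega
  rw [Finset.sum_range_succ', two_mul]
  nth_rewrite 2 [hreflect]
  rw [zero_mul, Nat.zero_div, add_zero, add_zero, ← Finset.sum_add_distrib,
    Finset.sum_congr rfl fun j hj =>
      Nat.mul_div_add_sub_mul_div had j.succ_pos (by simpa using Finset.mem_range.mp hj),
    Finset.sum_const, Finset.card_range, smul_eq_mul, Nat.add_sub_cancel, mul_comm]

lemma Nat.bijOn_mul_mod {a d : ℕ} (had : a.Coprime d) :
    Set.BijOn (fun r => r * a % d) (Set.Iio d) (Set.Iio d) := by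
  have hmaps : Set.MapsTo (fun r => r * a % d) (Set.Iio d) (Set.Iio d) :=
    fun r hr => Nat.mod_lt _ (Nat.zero_lt_of_lt hr)
  refine ((Set.finite_Iio d).injOn_iff_bijOn_of_mapsTo hmaps).mp fun r hr r' hr' h => ?_
  have := Nat.ModEq.cancel_right_of_coprime had.symm h
  rwa [Nat.ModEq, Nat.mod_eq_of_lt hr, Nat.mod_eq_of_lt hr'] at this

lemma Set.ncard_Iio_union_image_add_right {s : Set ℕ} (hs : s.Finite) (q : ℕ) :
    (Set.Iio q ∪ (· + q) '' s).ncard = q + s.ncard := by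
  have hdisj : Disjoint (Set.Iio q) ((· + q) '' s) :=
    Set.disjoint_left.mpr fun j hj ⟨y, _, hy⟩ => by simp only [Set.mem_Iio, ← hy] at hj; omega
  rw [Set.ncard_union_eq hdisj (Set.finite_Iio q) (hs.image _),
    Set.ncard_image_of_injective _ (add_left_injective q), ← Finset.coe_range,
    Set.ncard_coe_finset, Finset.card_range]

/-- `(lowRep A s).ncard` is the paper's `n*_s(A)`. -/
def lowRep {k : ℕ} (A : Fin k → ℕ) (s : ℕ) : Set ℕ := {x : ℕ | numRep A x ≤ s}

section

variable {k : ℕ} {A : Fin k → ℕ}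

lemma numRep_eq_zero_of_neg {x : ℤ} (hx : x < 0) : numRep A x = 0 := by
  have : {m : Fin k → ℕ | ∑ i, (m i : ℤ) * A i = x} = ∅ :=
    Set.eq_empty_of_forall_notMem fun m hm => hx.not_ge (hm ▸ by positivity)
  rw [numRep, this, Set.ncard_empty]

lemma finite_setOf_sum_eq (hA : ∀ i, 0 < A i) (x : ℤ) :
    {m : Fin k → ℕ | ∑ i, (m i : ℤ) * A i = x}.Finite := by
  refine (Set.finite_Iic fun _ => x.toNat).subset fun m hm i => ?_
  have hle : (m i : ℤ) * A i ≤ x :=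
    hm ▸ Finset.single_le_sum (f := fun j => (m j : ℤ) * A j) (fun j _ => by positivity)
      (Finset.mem_univ i)
  have : (m i : ℤ) ≤ m i * A i := le_mul_of_one_le_right (by positivity) (by exact_mod_cast hA i)
  show m i ≤ x.toNat
  omega

lemma exists_sum_eq_of_ge (hA : Finset.univ.gcd A = 1) :
    ∃ N, ∀ x ≥ N, ∃ m : Fin k → ℕ, ∑ i, m i * A i = x := by
  obtain ⟨N, hN⟩ := Nat.exists_mem_closure_of_ge (Set.range A)
  have hgcd : Nat.setGcd (Set.range A) = 1 :=
    Nat.dvd_one.mp (hA ▸ Finset.dvd_gcd fun i _ => Nat.setGcd_dvd_of_mem ⟨i, rfl⟩)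
  refine ⟨N, fun x hx => ?_⟩
  obtain ⟨m, hm⟩ := AddSubmonoid.mem_closure_range_iff_of_fintype.mp
    (hN x hx (hgcd ▸ one_dvd x))
  exact ⟨m, by simpa using hm.symm⟩

open Finset in
lemma succ_le_numRep_add (hA : ∀ i, 0 < A i) {i j : Fin k} (hij : i ≠ j) (m : Fin k → ℕ)
    (s : ℕ) : s + 1 ≤ numRep A (∑ l, (m l : ℤ) * A l + s * (A i * A j)) := by
  classical
  -- each of the `s + 1` splittings `t + u = s` of `s * (A i * A j)` gives its own representation
  set φ : ℕ × ℕ → Fin k → ℕ := fun p => m + Pi.single i (p.1 * A j) + Pi.single j (p.2 * A i)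
  have hinj : Set.InjOn φ (antidiagonal s) := by
    rintro ⟨t, u⟩ htu ⟨t', u'⟩ htu' h
    obtain rfl : t = t' := by simpa [φ, hij, (hA j).ne'] using congrFun h i
    simp only [mem_coe, HasAntidiagonal.mem_antidiagonal] at htu htu'
    exact Prod.ext rfl (by omega)
  have hmaps : φ '' (antidiagonal s) ⊆
      {m' | ∑ l, (m' l : ℤ) * A l = ∑ l, (m l : ℤ) * A l + s * (A i * A j)} := by
    rintro _ ⟨⟨t, u⟩, htu, rfl⟩
    simp only [mem_coe, HasAntidiagonal.mem_antidiagonal] at htu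
    simp only [φ, ← htu, Set.mem_ofPred_eq, Pi.add_apply, Pi.single_apply, Nat.cast_add,
      Nat.cast_mul, Nat.cast_ite, CharP.cast_eq_zero, add_mul, ite_mul, zero_mul, sum_add_distrib,
      sum_ite_eq', mem_univ, ↓reduceIte]
    ring
  calc s + 1 = (φ '' (antidiagonal s)).ncard := by
        rw [hinj.ncard_image, Set.ncard_coe_finset, Nat.card_antidiagonal]
    _ ≤ _ := Set.ncard_le_ncard hmaps (finite_setOf_sum_eq hA _)

lemma finite_lowRep (hA : ∀ i, 0 < A i) (hgcd : Finset.univ.gcd A = 1) {i j : Fin k}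
    (hij : i ≠ j) (s : ℕ) : (lowRep A s).Finite := by
  obtain ⟨N, hN⟩ := exists_sum_eq_of_ge hgcd
  refine (Set.finite_Iio (N + s * (A i * A j))).subset fun x (hx : numRep A x ≤ s) => ?_
  by_contra! hlarge
  rw [Set.mem_Iio, not_lt] at hlarge
  obtain ⟨m, hm⟩ := hN (x - s * (A i * A j)) (by omega)
  have hxsum : (x : ℤ) = ∑ l, (m l : ℤ) * A l + s * (A i * A j) := by
    exact_mod_cast (by omega : x = ∑ l, m l * A l + s * (A i * A j))
  have := succ_le_numRep_add hA hij m s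
  rw [← hxsum] at this
  omega

lemma setOf_numRep_sub_le_eq (s q : ℕ) :
    {j : ℕ | numRep A ((j : ℤ) - q) ≤ s} = Set.Iio q ∪ (· + q) '' lowRep A s := by
  ext j
  simp only [Set.mem_ofPred_eq, Set.mem_union, Set.mem_Iio, Set.mem_image, lowRep]
  constructor
  · intro h
    by_cases hj : j < q
    · exact Or.inl hj
    · exact Or.inr ⟨j - q, by rwa [Nat.cast_sub (not_lt.mp hj)], by omega⟩
  · rintro (hj | ⟨y, hy, rfl⟩)
    · rw [numRep_eq_zero_of_neg (by omega : (j : ℤ) - q < 0)]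
      exact Nat.zero_le s
    · simpa using hy

lemma numRep_cons (a : ℕ) (b : Fin k → ℕ) (x : ℤ) : numRep (Fin.cons a b) x =
    {p : ℕ × (Fin k → ℕ) | p.1 * a + ∑ i, (p.2 i : ℤ) * b i = x}.ncard := by
  rw [numRep, ← Set.ncard_image_of_injective _ (Fin.consEquiv fun _ => ℕ).injective]
  congr 1
  ext m
  simp [Fin.sum_univ_succ, Equiv.image_eq_preimage_symm, Fin.tail]

lemma numRep_cons_mul_add {a d : ℕ} {b b' : Fin k → ℕ} (hb : ∀ i, b i = d * b' i)
    (had : a.Coprime d) {r : ℕ} (hr : r < d) (y : ℤ) :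
    numRep (Fin.cons a b) (r * a + d * y) = numRep (Fin.cons a b') y := by
  have hd : d ≠ 0 := by omega
  have hinj : Function.Injective (Prod.map (fun t : ℕ => r + d * t) (id : (Fin k → ℕ) → _)) :=
    Prod.map_injective.mpr ⟨fun t t' h => by simpa [hd] using h, Function.injective_id⟩
  rw [numRep_cons, numRep_cons]
  refine Eq.trans ?_ (Set.ncard_image_of_injective _ hinj)
  congr 1
  ext ⟨m₀, m⟩
  have hsum : ∑ i, (m i : ℤ) * b i = d * ∑ i, (m i : ℤ) * b' i := by
    rw [Finset.mul_sum]
    exact Finset.sum_congr rfl fun i _ => by rw [hb]; push_cast; ring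
  simp only [Set.mem_ofPred_eq, Set.mem_image, Prod.exists, Prod.map, id, Prod.mk.injEq, hsum]
  constructor
  · intro h
    have hdvd : (d : ℤ) ∣ m₀ - r :=
      (Nat.isCoprime_iff_coprime.mpr had.symm).dvd_of_dvd_mul_right
        ⟨y - ∑ i, (m i : ℤ) * b' i, by linear_combination h⟩
    have hmod : m₀ % d = r := Eq.trans (Nat.modEq_iff_dvd.mpr hdvd).symm (Nat.mod_eq_of_lt hr)
    obtain ⟨t, rfl⟩ : ∃ t, m₀ = r + d * t := ⟨m₀ / d, by rw [← hmod, Nat.mod_add_div]⟩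
    refine ⟨t, m, mul_left_cancel₀ (Nat.cast_ne_zero.mpr hd) ?_, rfl, rfl⟩
    push_cast at h
    linear_combination h
  · rintro ⟨t, _, h, rfl, rfl, rfl⟩
    push_cast
    linear_combination (d : ℤ) * h

lemma numRep_cons_mod_add {a d : ℕ} {b b' : Fin k → ℕ} (hb : ∀ i, b i = d * b' i)
    (had : a.Coprime d) {r : ℕ} (hr : r < d) (j : ℕ) :
    numRep (Fin.cons a b) ↑(r * a % d + d * j) = numRep (Fin.cons a b') (j - ↑(r * a / d)) := by
  rw [← numRep_cons_mul_add hb had hr]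
  have := congrArg (Nat.cast : ℕ → ℤ) (Nat.div_add_mod (r * a) d)
  push_cast at this ⊢
  congr 1
  linear_combination this

lemma ncard_lowRep_cons {a d s : ℕ} {b b' : Fin k → ℕ} (hb : ∀ i, b i = d * b' i)
    (had : a.Coprime d) (hd : 0 < d) (hfin : (lowRep (Fin.cons a b') s).Finite) :
    (lowRep (Fin.cons a b) s).ncard
      = ∑ r ∈ Finset.range d, (r * a / d + (lowRep (Fin.cons a b') s).ncard) := by
  set e : ℕ → ℕ → ℕ := fun r j => r * a % d + d * j
  have he : ∀ r, Function.Injective (e r) := fun r j j' h => by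
    simpa [e, hd.ne'] using h
  have hunion : lowRep (Fin.cons a b) s = ⋃ r ∈ (Finset.range d : Set ℕ),
      e r '' {j : ℕ | numRep (Fin.cons a b') ((j : ℤ) - ↑(r * a / d)) ≤ s} := by
    ext x
    simp only [lowRep, Set.mem_ofPred_eq, Set.mem_iUnion, Set.mem_image, Finset.coe_range,
      Set.mem_Iio]
    constructor
    · intro hx
      obtain ⟨r, hr, hrx⟩ := (Nat.bijOn_mul_mod had).surjOn (Nat.mod_lt x hd)
      have hex : r * a % d + d * (x / d) = x := by
        rw [show r * a % d = x % d from hrx, Nat.mod_add_div]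
      exact ⟨r, hr, x / d, by rwa [← numRep_cons_mod_add hb had hr, hex], hex⟩
    · rintro ⟨r, hr, j, hj, rfl⟩
      exact (numRep_cons_mod_add hb had hr j).trans_le hj
  simp only [setOf_numRep_sub_le_eq] at hunion
  have hdisj : (Finset.range d : Set ℕ).PairwiseDisjoint fun r =>
      e r '' (Set.Iio (r * a / d) ∪ (· + r * a / d) '' lowRep (Fin.cons a b') s) := by
    intro r hr r' hr' hne
    refine Set.disjoint_left.mpr ?_
    rintro _ ⟨j, _, rfl⟩ ⟨j', _, h⟩
    refine hne ((Nat.bijOn_mul_mod had).injOn (by simpa using hr) (by simpa using hr') ?_)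
    simpa [e, Nat.add_mul_mod_self_left, Nat.mod_mod] using (congrArg (· % d) h).symm
  rw [hunion, Set.Finite.ncard_biUnion (Finset.finite_toSet _)
    (fun r _ => ((Set.finite_Iio _).union (hfin.image _)).image _) hdisj, finsum_mem_coe_finset]
  exact Finset.sum_congr rfl fun r _ => by
    rw [Set.ncard_image_of_injective _ (he r), Set.ncard_Iio_union_image_add_right hfin]

end

/-- Johnson-type reduction for `n*ₛ`, the number of nonnegative integers with at
most `s` representations: `2·n*ₛ(a₁,…,a_k) = 2·d·n*ₛ(a₁,a₂',…,a_k') + (a₁−1)(d−1)`. -/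
theorem stmt11 (k : ℕ) (hk : 0 < k) (a₁ : ℕ) (ha₁ : 0 < a₁)
    (b b' : Fin k → ℕ) (hb : ∀ i, 0 < b i)
    (d : ℕ) (hd : d = Finset.univ.gcd b) (hb' : ∀ i, b i = d * b' i)
    (hgcd : Finset.univ.gcd (Fin.cons a₁ b) = 1)
    (s : ℕ) :
    2 * {x : ℕ | numRep (Fin.cons a₁ b) (x : ℤ) ≤ s}.ncard
      = 2 * d * {x : ℕ | numRep (Fin.cons a₁ b') (x : ℤ) ≤ s}.ncard
        + (a₁ - 1) * (d - 1) := by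
  have hd₀ : 0 < d := Nat.pos_of_ne_zero fun h =>
    (hb ⟨0, hk⟩).ne' (Finset.gcd_eq_zero_iff.mp (hd ▸ h) _ (Finset.mem_univ _))
  have hb'₀ : ∀ i, 0 < b' i := fun i => Nat.pos_of_mul_pos_left (hb' i ▸ hb i)
  have hgcd' : Finset.univ.gcd b' = 1 := by
    refine Nat.eq_of_mul_eq_mul_left hd₀ ?_
    calc d * Finset.univ.gcd b' = Finset.univ.gcd fun i => d * b' i := by
          rw [Finset.gcd_mul_left, normalize_eq]
      _ = d * 1 := by rw [← funext hb', ← hd, mul_one]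
  have had : a₁.Coprime d := by rwa [Fin.univ_gcd_cons, ← hd] at hgcd
  have hfin : (lowRep (Fin.cons a₁ b') s).Finite :=
    finite_lowRep (Fin.cases ha₁ hb'₀) (by rw [Fin.univ_gcd_cons, hgcd', gcd_one_right])
      (Fin.succ_ne_zero (⟨0, hk⟩ : Fin k)).symm s
  change 2 * (lowRep (Fin.cons a₁ b) s).ncard = 2 * d * (lowRep (Fin.cons a₁ b') s).ncard + _
  rw [ncard_lowRep_cons hb' had hd₀ hfin, Finset.sum_add_distrib, mul_add,
    Nat.two_mul_sum_range_mul_div had, Finset.sum_const, Finset.card_range, smul_eq_mul]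
  ring
end

section
/- Let a_1, …, a_k be positive integers with gcd(a_1, …, a_k) = 1, let d = gcd(a_2, …, a_k), and write a_j = d·a_j' for 2 ≤ j ≤ k. For s ∈ ℕ and 0 ≤ j ≤ a_1 − 1, let n_{j,s} denote the least nonnegative integer congruent to j modulo a_1 with more than s representations in terms of (a_1, a_2, …, a_k), and let n'_{j,s} denote the least nonnegative integer congruent to j modulo a_1 with more than s representations in terms of (a_1, a_2', …, a_k'). Then, as sets, { n_{j,s} : 0 ≤ j ≤ a_1 − 1 } = { d·n'_{j,s} : 0 ≤ j ≤ a_1 − 1 }. -/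
def repSetN {k : ℕ} (a₁ : ℕ) (c : Fin k → ℕ) (x : ℕ) : Set (Fin (k+1) → ℕ) :=
  {m | m 0 * a₁ + ∑ i, m i.succ * c i = x}

lemma repSet_cons_eq {k : ℕ} (a₁ : ℕ) (c : Fin k → ℕ) (x : ℕ) :
    {m : Fin (k+1) → ℕ | (∑ i, (m i : ℤ) * ((Fin.cons a₁ c : Fin (k+1) → ℕ) i : ℤ)) = (x : ℤ)}
      = repSetN a₁ c x := by
  ext m
  simp only [Set.mem_setOf_eq, repSetN, Fin.sum_univ_succ, Fin.cons_zero, Fin.cons_succ]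
  constructor <;> intro h <;> exact_mod_cast h

lemma numRep_cons_s12 {k : ℕ} (a₁ : ℕ) (c : Fin k → ℕ) (x : ℕ) :
    numRep (Fin.cons a₁ c) (x : ℤ) = (repSetN a₁ c x).ncard := by
  unfold numRep
  rw [repSet_cons_eq]

lemma repSetN_finite {k : ℕ} (a₁ : ℕ) (ha₁ : 0 < a₁) (c : Fin k → ℕ) (hc : ∀ i, 0 < c i)
    (x : ℕ) : (repSetN a₁ c x).Finite := by
  rw [← repSet_cons_eq]
  apply repSet_finite
  intro i
  induction i using Fin.cases with
  | zero => simpa using ha₁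
  | succ j => simpa using hc j

lemma sum_mul_d {k d : ℕ} (b' : Fin k → ℕ) (m : Fin (k+1) → ℕ) :
    ∑ i, m i.succ * (d * b' i) = d * ∑ i, m i.succ * b' i := by
  rw [Finset.mul_sum]
  exact Finset.sum_congr rfl (fun i _ => by ring)

lemma small_le_big {k a₁ d : ℕ} (ha₁ : 0 < a₁) (hd : 0 < d) (b' : Fin k → ℕ)
    (hb'pos : ∀ i, 0 < b' i) (N : ℕ) :
    (repSetN a₁ b' N).ncard ≤ (repSetN a₁ (fun i => d * b' i) (d * N)).ncard := by
  refine Set.ncard_le_ncard_of_injOn (fun m => Fin.cons (d * m 0) (Fin.tail m)) ?_ ?_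
    (repSetN_finite a₁ ha₁ _ (fun i => Nat.mul_pos hd (hb'pos i)) _)
  · intro m hm
    simp only [repSetN, Set.mem_setOf_eq] at *
    simp only [Fin.cons_zero, Fin.cons_succ, Fin.tail]
    rw [sum_mul_d b' m, ← hm]
    ring
  · intro m hm m2 hm2 h
    have ht : ∀ i : Fin k, m i.succ = m2 i.succ := by
      intro i
      have := congrFun h i.succ
      simpa [Fin.cons_succ, Fin.tail] using this
    have h0 : m 0 = m2 0 := by
      have := congrFun h 0
      simp only [Fin.cons_zero] at this
      exact Nat.eq_of_mul_eq_mul_left hd this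
    funext i
    induction i using Fin.cases with
    | zero => exact h0
    | succ j => exact ht j

lemma big_le_small {k a₁ d : ℕ} (ha₁ : 0 < a₁) (hd : 0 < d) (b' : Fin k → ℕ)
    (hb'pos : ∀ i, 0 < b' i) (y x' j' : ℕ)
    (hmod : x' % a₁ = j')
    (hmax : ∀ t, t % a₁ = j' → d * t ≤ y → t ≤ x')
    (hcong : ∀ m ∈ repSetN a₁ (fun i => d * b' i) y, (∑ i, m i.succ * b' i) % a₁ = j') :
    (repSetN a₁ (fun i => d * b' i) y).ncard ≤ (repSetN a₁ b' x').ncard := by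
  refine Set.ncard_le_ncard_of_injOn
    (fun m => Fin.cons ((x' - ∑ i, m i.succ * b' i) / a₁) (Fin.tail m)) ?_ ?_
    (repSetN_finite a₁ ha₁ _ hb'pos _)
  · intro m hm
    have htj := hcong m hm
    simp only [repSetN, Set.mem_setOf_eq] at *
    set t := ∑ i, m i.succ * b' i with htdef
    rw [sum_mul_d b' m, ← htdef] at hm
    have hdty : d * t ≤ y := by omega
    have htx : t ≤ x' := hmax t htj hdty
    have hdvd : a₁ ∣ x' - t := by
      have : t ≡ x' [MOD a₁] := by unfold Nat.ModEq; omega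
      exact (Nat.modEq_iff_dvd' htx).mp this
    simp only [Fin.cons_zero, Fin.cons_succ, Fin.tail]
    rw [← htdef, Nat.div_mul_cancel hdvd]
    omega
  · intro m hm m2 hm2 h
    have ht : ∀ i : Fin k, m i.succ = m2 i.succ := by
      intro i
      have := congrFun h i.succ
      simpa [Fin.cons_succ, Fin.tail] using this
    have hts : ∑ i, m i.succ * b' i = ∑ i, m2 i.succ * b' i :=
      Finset.sum_congr rfl (fun i _ => by rw [ht i])
    simp only [repSetN, Set.mem_setOf_eq, sum_mul_d] at hm hm2
    have h0 : m 0 = m2 0 := by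
      rw [hts] at hm
      have : m 0 * a₁ = m2 0 * a₁ := by omega
      exact Nat.eq_of_mul_eq_mul_right ha₁ this
    funext i
    induction i using Fin.cases with
    | zero => exact h0
    | succ j => exact ht j

/-- With `d = gcd(a₂,…,a_k)` and `aⱼ = d·aⱼ'`, the least nonnegative integers
`n j` (resp. `n' j`) congruent to `j` mod `a₁` with more than `s` representations
in terms of `(a₁, a₂, …, a_k)` (resp. `(a₁, a₂', …, a_k')`) satisfy
`{ n j : j < a₁ } = { d·n' j : j < a₁ }` as sets. -/
theorem stmt12 (k : ℕ) (hk : 0 < k) (a₁ : ℕ) (ha₁ : 0 < a₁)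
    (b b' : Fin k → ℕ) (hb : ∀ i, 0 < b i)
    (d : ℕ) (hd : d = Finset.univ.gcd b) (hb' : ∀ i, b i = d * b' i)
    (hgcd : Finset.univ.gcd (Fin.cons a₁ b) = 1)
    (s : ℕ) (n n' : ℕ → ℕ)
    (hn : ∀ j < a₁,
      IsLeast {x : ℕ | x % a₁ = j ∧ s < numRep (Fin.cons a₁ b) (x : ℤ)} (n j))
    (hn' : ∀ j < a₁,
      IsLeast {x : ℕ | x % a₁ = j ∧ s < numRep (Fin.cons a₁ b') (x : ℤ)} (n' j)) :
    Finset.image n (Finset.range a₁)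
      = Finset.image (fun j => d * n' j) (Finset.range a₁) := by
  have hbb : b = fun i => d * b' i := funext hb'
  have hd0 : 0 < d := by
    have hdvd : d ∣ b ⟨0, hk⟩ := hd ▸ Finset.gcd_dvd (Finset.mem_univ _)
    exact Nat.pos_of_dvd_of_pos hdvd (hb _)
  have hb'pos : ∀ i, 0 < b' i := by
    intro i
    rcases Nat.eq_zero_or_pos (b' i) with h | h
    · have := hb i; rw [hb' i, h, Nat.mul_zero] at this; omega
    · exact h
  have hco : Nat.gcd a₁ d = 1 := by
    have h1 : Nat.gcd a₁ d ∣ Finset.univ.gcd (Fin.cons a₁ b) := by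
      apply Finset.dvd_gcd
      intro i _
      induction i using Fin.cases with
      | zero => simpa using Nat.gcd_dvd_left a₁ d
      | succ j =>
        simp only [Fin.cons_succ]
        exact dvd_trans (Nat.gcd_dvd_right a₁ d) ⟨b' j, hb' j⟩
    rw [hgcd] at h1
    exact Nat.dvd_one.mp h1
  have hcancel : ∀ t u : ℕ, (d * t) % a₁ = (d * u) % a₁ → t % a₁ = u % a₁ :=
    fun t u h => Nat.ModEq.cancel_left_of_coprime hco h
  -- Step A
  have stepA : ∀ j' < a₁, s < numRep (Fin.cons a₁ b) ((d * n' j' : ℕ) : ℤ) := by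
    intro j' hj'
    have hm' := (hn' j' hj').1.2
    rw [numRep_cons_s12] at hm'
    rw [hbb, numRep_cons_s12]
    exact lt_of_lt_of_le hm' (small_le_big ha₁ hd0 b' hb'pos (n' j'))
  -- Step B
  have stepB : ∀ j' < a₁, ∀ y : ℕ, y % a₁ = (d * n' j') % a₁ → y < d * n' j' →
      numRep (Fin.cons a₁ b) (y : ℤ) ≤ s := by
    intro j' hj' y hymod hylt
    rw [hbb, numRep_cons_s12]
    by_cases hS : repSetN a₁ (fun i => d * b' i) y = ∅
    · rw [hS]; simp
    obtain ⟨m, hm⟩ := Set.nonempty_iff_ne_empty.mpr hS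
    have hnj'mod : n' j' % a₁ = j' := (hn' j' hj').1.1
    have hcong : ∀ m2 ∈ repSetN a₁ (fun i => d * b' i) y,
        (∑ i, m2 i.succ * b' i) % a₁ = j' := by
      intro m2 hm2
      simp only [repSetN, Set.mem_setOf_eq, sum_mul_d] at hm2
      set t := ∑ i, m2 i.succ * b' i with htdef
      have h1 : (d * t) % a₁ = y % a₁ := by
        rw [← hm2, Nat.mul_comm (m2 0) a₁, Nat.mul_add_mod]
      rw [hymod] at h1
      have h2 := hcancel t (n' j') h1
      rw [hnj'mod] at h2
      exact h2
    have hm0 := hm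
    simp only [repSetN, Set.mem_setOf_eq, sum_mul_d] at hm0
    set t₀ := ∑ i, m i.succ * b' i with ht₀def
    have ht₀j : t₀ % a₁ = j' := hcong m hm
    set q := y / d with hqdef
    have hqt : t₀ ≤ q := by
      rw [hqdef]
      exact Nat.le_div_iff_mul_le hd0 |>.mpr (by rw [Nat.mul_comm]; omega)
    have hj'q : j' ≤ q := le_trans (by rw [← ht₀j]; exact Nat.mod_le _ _) hqt
    set Q := (q - j') / a₁ with hQdef
    set R := (q - j') % a₁ with hRdef
    have hQR : a₁ * Q + R = q - j' := Nat.div_add_mod (q - j') a₁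
    have hR : R < a₁ := Nat.mod_lt _ ha₁
    set x' := j' + a₁ * Q with hx'def
    have hx'mod : x' % a₁ = j' := by
      rw [hx'def, Nat.add_mul_mod_self_left]
      exact Nat.mod_eq_of_lt hj'
    have hx'q : x' ≤ q := by omega
    have hdx'y : d * x' ≤ y := by
      calc d * x' ≤ d * q := Nat.mul_le_mul_left d hx'q
        _ = d * (y / d) := rfl
        _ ≤ y := Nat.mul_div_le y d
    have hmax : ∀ t, t % a₁ = j' → d * t ≤ y → t ≤ x' := by
      intro t htj hdt
      have htq : t ≤ q := by
        rw [hqdef]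
        exact Nat.le_div_iff_mul_le hd0 |>.mpr (by rw [Nat.mul_comm]; omega)
      have hteq : a₁ * (t / a₁) + j' = t := by
        conv_rhs => rw [← Nat.div_add_mod t a₁]
        rw [htj]
      set u := t / a₁ with hudef
      by_cases hu : u ≤ Q
      · have := Nat.mul_le_mul_left a₁ hu
        omega
      · exfalso
        have h1 : Q + 1 ≤ u := by omega
        have h2 := Nat.mul_le_mul_left a₁ h1
        have h3 : a₁ * (Q + 1) = a₁ * Q + a₁ := by ring
        omega
    have hend := big_le_small ha₁ hd0 b' hb'pos y x' j' hx'mod hmax hcong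
    refine le_trans hend ?_
    have hx'lt : x' < n' j' := by
      have h4 : d * x' < d * n' j' := lt_of_le_of_lt hdx'y hylt
      exact Nat.lt_of_mul_lt_mul_left h4
    by_contra hle
    push_neg at hle
    have h5 : n' j' ≤ x' := (hn' j' hj').2 ⟨hx'mod, by rw [numRep_cons_s12]; exact hle⟩
    omega
  -- Key identity
  have key : ∀ j' < a₁, n ((d * n' j') % a₁) = d * n' j' := by
    intro j' hj'
    have hjlt : (d * n' j') % a₁ < a₁ := Nat.mod_lt _ ha₁
    obtain ⟨⟨hmem1, hmem2⟩, hlb⟩ := hn _ hjlt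
    have hle : n ((d * n' j') % a₁) ≤ d * n' j' := hlb ⟨rfl, stepA j' hj'⟩
    rcases lt_or_eq_of_le hle with hlt | heq
    · exfalso
      have := stepB j' hj' _ hmem1 hlt
      omega
    · exact heq
  -- the map on residues
  set g : ℕ → ℕ := fun j' => (d * n' j') % a₁ with hgdef
  have ginj : Set.InjOn g (Finset.range a₁) := by
    intro j₁ hj₁ j₂ hj₂ hg
    simp only [Finset.coe_range, Set.mem_Iio] at hj₁ hj₂
    have h1 := hcancel (n' j₁) (n' j₂) hg
    rw [(hn' j₁ hj₁).1.1, (hn' j₂ hj₂).1.1] at h1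
    exact h1
  have himg : Finset.image g (Finset.range a₁) = Finset.range a₁ := by
    apply Finset.eq_of_subset_of_card_le
    · intro x hx
      simp only [Finset.mem_image, Finset.mem_range] at hx ⊢
      obtain ⟨j', _, rfl⟩ := hx
      exact Nat.mod_lt _ ha₁
    · rw [Finset.card_image_of_injOn ginj]
  ext x
  simp only [Finset.mem_image, Finset.mem_range]
  constructor
  · rintro ⟨j, hj, rfl⟩
    have : j ∈ Finset.image g (Finset.range a₁) := by
      rw [himg]; exact Finset.mem_range.mpr hj
    simp only [Finset.mem_image, Finset.mem_range] at this
    obtain ⟨j', hj', hgj⟩ := this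
    exact ⟨j', hj', by rw [← hgj]; exact (key j' hj').symm⟩
  · rintro ⟨j', hj', rfl⟩
    exact ⟨g j', Nat.mod_lt _ ha₁, key j' hj'⟩
end

section
/- Let a_1 and a_2 be relatively prime positive integers and let s ∈ ℕ. Then (s+1)·a_1·a_2 − a_1 − a_2 is the greatest integer (in ℤ, where negative integers have zero representations) having exactly s representations in terms of (a_1, a_2); that is, g_s(a_1, a_2) = (s+1)·a_1·a_2 − a_1 − a_2. -/
lemma numRep_two (a b : ℕ) (x : ℤ) :
    numRep ![a, b] x = {m : Fin 2 → ℕ | (m 0 : ℤ) * a + (m 1 : ℤ) * b = x}.ncard := by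
  unfold numRep
  congr 1

/-- Key formula: if `u < b` and `b ∣ x - a*u`, then the number of representations
is `⌊(x - a*u)/(a*b)⌋ + 1` (truncated at 0). -/
lemma numRep_formula (a b : ℕ) (ha : 0 < a) (hb : 0 < b) (hcop : Nat.Coprime a b)
    (x : ℤ) (u : ℕ) (hu : u < b) (hdvd : (b : ℤ) ∣ x - a * u) :
    numRep ![a, b] x = ((x - a * u) / (a * b) + 1).toNat := by
  rw [numRep_two]
  have hab : (0 : ℤ) < (a : ℤ) * b := by positivity
  have hb' : (0 : ℤ) < (b : ℤ) := by exact_mod_cast hb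
  have hub : (u : ℤ) < (b : ℤ) := by exact_mod_cast hu
  set Q : ℤ := (x - a * u) / (a * b) with hQ
  set f : ℕ → (Fin 2 → ℕ) :=
    fun j => ![u + j * b, ((x - (a : ℤ) * ((u : ℤ) + j * b)) / b).toNat] with hf
  have hinj : Function.Injective f := by
    intro j j' h
    have h0 := congrFun h 0
    simp only [hf, Matrix.cons_val_zero] at h0
    have : j * b = j' * b := by omega
    exact Nat.eq_of_mul_eq_mul_right hb this
  have himg : {m : Fin 2 → ℕ | (m 0 : ℤ) * a + (m 1 : ℤ) * b = x}
      = f '' (Set.Iio (Q + 1).toNat) := by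
    ext m
    simp only [Set.mem_setOf_eq, Set.mem_image, Set.mem_Iio]
    constructor
    · intro hm
      have h1 : (b : ℤ) ∣ (a : ℤ) * ((m 0 : ℤ) - u) := by
        have he : (a : ℤ) * ((m 0 : ℤ) - u) = (x - a * u) - (m 1 : ℤ) * b := by
          linarith [hm]
        rw [he]
        exact dvd_sub hdvd ⟨(m 1 : ℤ), by ring⟩
      have hcop' : IsCoprime (b : ℤ) (a : ℤ) :=
        Nat.isCoprime_iff_coprime.mpr hcop.symm
      obtain ⟨t, ht⟩ := hcop'.dvd_of_dvd_mul_left h1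
      have hm0 : (0 : ℤ) ≤ (m 0 : ℤ) := Int.natCast_nonneg _
      have ht0 : 0 ≤ t := by nlinarith
      have htQ : t ≤ Q := by
        rw [hQ, Int.le_ediv_iff_mul_le hab]
        have hm1 : (0 : ℤ) ≤ (m 1 : ℤ) := Int.natCast_nonneg _
        nlinarith
      refine ⟨t.toNat, by omega, ?_⟩
      have hm0e : m 0 = u + t.toNat * b := by
        have : (m 0 : ℤ) = ((u + t.toNat * b : ℕ) : ℤ) := by
          push_cast [Int.toNat_of_nonneg ht0]
          linarith
        exact_mod_cast this
      funext i
      fin_cases i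
      · simp [hf, hm0e]
      · have hc : ((m 0 : ℕ) : ℤ) = (u : ℤ) + (t.toNat : ℤ) * b := by
          exact_mod_cast congrArg (Nat.cast : ℕ → ℤ) hm0e
        have hx1 : x - (a : ℤ) * ((u : ℤ) + (t.toNat : ℤ) * b) = b * (m 1 : ℤ) := by
          linear_combination (a : ℤ) * hc - hm
        have hm1e : m 1 = ((x - (a : ℤ) * ((u : ℤ) + (t.toNat : ℤ) * b)) / b).toNat := by
          rw [hx1, Int.mul_ediv_cancel_left _ (ne_of_gt hb'), Int.toNat_natCast]
        simp [hf, hm1e]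
    · rintro ⟨j, hj, rfl⟩
      have hjQ : (j : ℤ) ≤ Q := by omega
      have hmul : (j : ℤ) * ((a : ℤ) * b) ≤ x - a * u :=
        (Int.le_ediv_iff_mul_le hab).mp hjQ
      have hge : (0 : ℤ) ≤ x - (a : ℤ) * ((u : ℤ) + j * b) := by nlinarith
      have hdvd2 : (b : ℤ) ∣ x - (a : ℤ) * ((u : ℤ) + j * b) := by
        have he : x - (a : ℤ) * ((u : ℤ) + j * b) = (x - a * u) - b * (a * j) := by
          ring
        rw [he]
        exact dvd_sub hdvd ⟨(a : ℤ) * j, rfl⟩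
      simp only [hf, Matrix.cons_val_zero, Matrix.cons_val_one, Matrix.head_cons]
      rw [Int.toNat_of_nonneg (Int.ediv_nonneg hge hb'.le)]
      push_cast
      rw [Int.ediv_mul_cancel hdvd2]
      ring
  rw [himg, Set.ncard_image_of_injective _ hinj, ← Finset.coe_Iio,
    Set.ncard_coe_finset, Nat.card_Iio]

/-- Existence of the residue `u`. -/
lemma exists_u (a b : ℕ) (hb : 0 < b) (hcop : Nat.Coprime a b) (x : ℤ) :
    ∃ u : ℕ, u < b ∧ (b : ℤ) ∣ x - a * u := by
  have hcop' : IsCoprime (a : ℤ) (b : ℤ) := Nat.isCoprime_iff_coprime.mpr hcop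
  obtain ⟨c, d, hcd⟩ := hcop'
  have hb' : (0 : ℤ) < (b : ℤ) := by exact_mod_cast hb
  refine ⟨((c * x) % b).toNat, ?_, ?_⟩
  · have h1 : 0 ≤ (c * x) % b := Int.emod_nonneg _ (ne_of_gt hb')
    have h2 : (c * x) % b < b := Int.emod_lt_of_pos _ hb'
    omega
  · have h1 : 0 ≤ (c * x) % b := Int.emod_nonneg _ (ne_of_gt hb')
    rw [Int.toNat_of_nonneg h1, Int.emod_def]
    refine ⟨x * d + a * ((c * x) / b), ?_⟩
    linear_combination (-x) * hcd

/-- Beck–Robins: `(s+1)·a₁·a₂ − a₁ − a₂` is the greatest integer having exactly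
`s` representations in terms of two coprime positive integers `a₁, a₂`. -/
theorem stmt14 (a₁ a₂ : ℕ) (h₁ : 0 < a₁) (h₂ : 0 < a₂)
    (hcop : Nat.Coprime a₁ a₂) (s : ℕ) :
    IsGreatest {x : ℤ | numRep ![a₁, a₂] x = s}
      (((s : ℤ) + 1) * (a₁ : ℤ) * (a₂ : ℤ) - (a₁ : ℤ) - (a₂ : ℤ)) := by
  have hab : (0 : ℤ) < (a₁ : ℤ) * a₂ := by positivity
  have ha' : (0 : ℤ) < (a₁ : ℤ) := by exact_mod_cast h₁
  have hb' : (0 : ℤ) < (a₂ : ℤ) := by exact_mod_cast h₂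
  set N : ℤ := ((s : ℤ) + 1) * (a₁ : ℤ) * (a₂ : ℤ) - a₁ - a₂ with hN
  constructor
  · -- membership: numRep N = s
    show numRep ![a₁, a₂] N = s
    have hb1 : ((a₂ - 1 : ℕ) : ℤ) = (a₂ : ℤ) - 1 := by omega
    have hdvd : (a₂ : ℤ) ∣ N - a₁ * ((a₂ - 1 : ℕ) : ℤ) := by
      refine ⟨(s : ℤ) * a₁ - 1, ?_⟩
      rw [hb1, hN]; ring
    rw [numRep_formula a₁ a₂ h₁ h₂ hcop N (a₂ - 1) (by omega) hdvd]
    have he : N - (a₁ : ℤ) * ((a₂ - 1 : ℕ) : ℤ)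
        = ((a₁ : ℤ) * a₂ - a₂) + ((s : ℤ) - 1) * ((a₁ : ℤ) * a₂) := by
      rw [hb1, hN]; ring
    rw [he, Int.add_mul_ediv_right _ _ (ne_of_gt hab),
      Int.ediv_eq_zero_of_lt (by nlinarith) (by nlinarith)]
    omega
  · -- upper bound
    rintro x hx
    simp only [Set.mem_setOf_eq] at hx
    obtain ⟨u, hu, hdvd⟩ := exists_u a₁ a₂ h₂ hcop x
    rw [numRep_formula a₁ a₂ h₁ h₂ hcop x u hu hdvd] at hx
    have hQle : (x - a₁ * u) / ((a₁ : ℤ) * a₂) + 1 ≤ (s : ℤ) := by omega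
    have hlt : x - a₁ * u < ((x - a₁ * u) / ((a₁ : ℤ) * a₂) + 1) * ((a₁ : ℤ) * a₂) :=
      Int.lt_ediv_add_one_mul_self _ hab
    have h3 : x - (a₁ : ℤ) * u < (s : ℤ) * ((a₁ : ℤ) * a₂) :=
      lt_of_lt_of_le hlt (mul_le_mul_of_nonneg_right hQle hab.le)
    obtain ⟨k, hk⟩ := hdvd
    have hk' : k ≤ (s : ℤ) * a₁ - 1 := by nlinarith
    have hu' : (u : ℤ) ≤ (a₂ : ℤ) - 1 := by omega
    have : x = (a₁ : ℤ) * u + (a₂ : ℤ) * k := by linarith [hk]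
    rw [hN]
    nlinarith [mul_le_mul_of_nonneg_left hu' ha'.le, mul_le_mul_of_nonneg_left hk' hb'.le]
end
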